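/- arXiv:2411.13868 — 10 statements merged into one kernel-verified Lean document; each statement's English description precedes it below -/
import Mathlib

section
/- Let P = (P_w)_{w∈W} be a probability distribution on a finite vocabulary with all P_w > 0, (U_w) i.i.d. Uniform(0,1), w* = argmax_w (log U_w)/P_w, and Y = U_{w*}. Then for every r ∈ [0,1], P(Y ≤ r) = Σ_{w∈W} P_w · r^{1/P_w}. -/
/-!
The vector `(U w)` has the product law of uniforms on `(0, 1)`, and the events "token `w₀` is
selected and `U w₀ ≤ r`" are disjoint. Given `U w₀ = u`, token `w₀` is selected iff
`U w < u ^ (P w / P w₀)` for every `w ≠ w₀`, which has probability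
`∏_{w ≠ w₀} u ^ (P w / P w₀) = u ^ (1 / P w₀ - 1)` because `∑ P = 1`. Integrating over
`u ∈ (0, r)` gives `P w₀ * r ^ (1 / P w₀)`.
-/

open MeasureTheory ProbabilityTheory Real Set

theorem volume_restrict_Ioo_setOf_log_div_lt {p q u : ℝ} (hp : 0 < p) (hq : 0 < q)
    (hu : u ∈ Ioo 0 1) :
    volume.restrict (Ioo 0 1) {t | log t / p < log u / q} = ENNReal.ofReal (u ^ (p / q)) := by
  have hiff : ∀ t, 0 < t → (log t / p < log u / q ↔ t < u ^ (p / q)) := fun t ht => by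
    rw [← log_lt_log_iff ht (rpow_pos_of_pos hu.1 _), log_rpow hu.1, div_lt_iff₀ hp,
      show p / q * log u = log u / q * p by ring]
  have hset : {t | log t / p < log u / q} ∩ Ioo 0 1 = Ioo 0 (u ^ (p / q)) := by
    ext t
    simp only [mem_inter_iff, mem_ofPred_eq, mem_Ioo]
    constructor
    · rintro ⟨h, ht0, -⟩
      exact ⟨ht0, (hiff t ht0).mp h⟩
    · rintro ⟨ht0, h⟩
      exact ⟨(hiff t ht0).mpr h, ht0, h.trans (rpow_lt_one hu.1.le hu.2 (by positivity))⟩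
  rw [Measure.restrict_apply' measurableSet_Ioo, hset, volume_Ioo, sub_zero]

theorem lintegral_Ioo_ofReal_rpow {a r : ℝ} (ha : -1 < a) (hr : 0 ≤ r) :
    ∫⁻ u in Ioo 0 r, ENNReal.ofReal (u ^ a) = ENNReal.ofReal (r ^ (a + 1) / (a + 1)) := by
  have hint : IntegrableOn (fun u : ℝ => u ^ a) (Ioc 0 r) := by
    simpa [intervalIntegrable_iff_integrableOn_Ioc_of_le hr] using
      intervalIntegral.intervalIntegrable_rpow' (a := 0) (b := r) ha
  have hnonneg : 0 ≤ᵐ[volume.restrict (Ioc 0 r)] fun u : ℝ => u ^ a :=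
    (ae_restrict_iff' measurableSet_Ioc).mpr (ae_of_all _ fun u hu => rpow_nonneg hu.1.le _)
  rw [Measure.restrict_congr_set Ioo_ae_eq_Ioc,
    ← ofReal_integral_eq_lintegral_ofReal hint hnonneg, ← intervalIntegral.integral_of_le hr,
    integral_rpow (Or.inl ha), zero_rpow (by linarith), sub_zero]

theorem measure_pi_setOf_forall_ne_mem_and_mem {ι α : Type*} [Fintype ι] [DecidableEq ι]
    [MeasurableSpace α] (ν : Measure α) [SigmaFinite ν] (i : ι)
    {A : ι → α → Set α} (hA : ∀ j, MeasurableSet {p : α × α | p.2 ∈ A j p.1})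
    {B : Set α} (hB : MeasurableSet B) :
    Measure.pi (fun _ : ι => ν) {x | (∀ j ≠ i, x j ∈ A j (x i)) ∧ x i ∈ B}
      = ∫⁻ u in B, ∏ j ∈ Finset.univ.erase i, ν (A j u) ∂ν := by
  set e := MeasurableEquiv.piEquivPiSubtypeProd (fun _ : ι => α) (· = i)
  let i' : {j // j = i} := ⟨i, rfl⟩
  set T : Set (({j // j = i} → α) × ({j // ¬ j = i} → α)) :=
    {y | (∀ j : {j // ¬ j = i}, y.2 j ∈ A j (y.1 i')) ∧ y.1 i' ∈ B}
  have hST : {x | (∀ j ≠ i, x j ∈ A j (x i)) ∧ x i ∈ B} = e ⁻¹' T := by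
    ext x; simp [e, T, i']
  have hT : MeasurableSet T := by
    have h1 : Measurable fun y : ({j // j = i} → α) × ({j // ¬ j = i} → α) => y.1 i' := by
      fun_prop
    simp only [T, ofPred_and, ofPred_forall]
    refine (MeasurableSet.iInter fun j : {j // ¬ j = i} => ?_).inter (hB.preimage h1)
    exact (hA j).preimage (h1.prodMk (by fun_prop))
  have hslice : ∀ a, Measure.pi (fun _ => ν) (Prod.mk a ⁻¹' T)
      = B.indicator (fun u => ∏ j ∈ Finset.univ.erase i, ν (A j u)) (a i') := by
    intro a
    by_cases ha : a i' ∈ B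
    · have hpi : Prod.mk a ⁻¹' T = Set.pi univ fun j : {j // ¬ j = i} => A j (a i') := by
        ext b; simp [T, ha]
      rw [hpi, Measure.pi_pi, indicator_of_mem ha]
      exact (Finset.prod_subtype _ (fun j => by simp) fun j => ν (A j (a i'))).symm
    · have hempty : Prod.mk a ⁻¹' T = ∅ := by
        ext b; simp [T, ha]
      rw [hempty, measure_empty, indicator_of_notMem ha]
  rw [hST, (measurePreserving_piEquivPiSubtypeProd (fun _ => ν) (· = i)).measure_preimage_equiv T,
    Measure.prod_apply hT, ← lintegral_indicator hB]
  simp_rw [hslice]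
  convert (measurePreserving_funUnique ν {j // j = i}).lintegral_comp_emb
    (MeasurableEquiv.measurableEmbedding _) _
  rfl

section Gumbel
variable {W : Type*}

def gumbelWinsBelow (P : W → ℝ) (r : ℝ) (w₀ : W) : Set (W → ℝ) :=
  {x | (∀ w, w ≠ w₀ → log (x w) / P w < log (x w₀) / P w₀) ∧ x w₀ ≤ r}

theorem measurableSet_gumbelWinsBelow [Countable W] (P : W → ℝ) (r : ℝ) (w₀ : W) :
    MeasurableSet (gumbelWinsBelow P r w₀) := by
  simp only [gumbelWinsBelow, ofPred_and, ofPred_forall]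
  exact (MeasurableSet.iInter fun w => MeasurableSet.iInter fun _ =>
    measurableSet_lt (by fun_prop) (by fun_prop)).inter
      (measurableSet_le (by fun_prop) (by fun_prop))

theorem pairwise_disjoint_gumbelWinsBelow (P : W → ℝ) (r : ℝ) :
    Pairwise (Function.onFun Disjoint (gumbelWinsBelow P r)) := fun a b hab =>
  disjoint_left.mpr fun _ hxa hxb => lt_asymm (hxa.1 b hab.symm) (hxb.1 a hab)

theorem prod_volume_restrict_Ioo_setOf_log_div_lt [Fintype W] [DecidableEq W] {P : W → ℝ}
    (hpos : ∀ w, 0 < P w) (hsum : ∑ w, P w = 1) (w₀ : W) {u : ℝ} (hu : u ∈ Ioo 0 1) :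
    ∏ w ∈ Finset.univ.erase w₀, volume.restrict (Ioo 0 1) {t | log t / P w < log u / P w₀}
      = ENNReal.ofReal (u ^ ((1 - P w₀) / P w₀)) := by
  rw [Finset.prod_congr rfl fun w _ => volume_restrict_Ioo_setOf_log_div_lt (hpos w) (hpos w₀) hu,
    ← ENNReal.ofReal_prod_of_nonneg fun w _ => (rpow_pos_of_pos hu.1 _).le,
    ← rpow_sum_of_pos hu.1, ← Finset.sum_div, Finset.sum_erase_eq_sub (Finset.mem_univ w₀),
    hsum]

theorem measure_pi_uniform_gumbelWinsBelow [Fintype W] {P : W → ℝ} (hpos : ∀ w, 0 < P w)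
    (hsum : ∑ w, P w = 1) {r : ℝ} (hr : r ∈ Icc 0 1) (w₀ : W) :
    Measure.pi (fun _ : W => volume.restrict (Ioo (0 : ℝ) 1)) (gumbelWinsBelow P r w₀)
      = ENNReal.ofReal (P w₀ * r ^ (1 / P w₀)) := by
  classical
  set A : W → ℝ → Set ℝ := fun w u => {t | log t / P w < log u / P w₀}
  have hA : ∀ w, MeasurableSet {p : ℝ × ℝ | p.2 ∈ A w p.1} := fun w =>
    measurableSet_lt (f := fun p : ℝ × ℝ => log p.2 / P w) (g := fun p => log p.1 / P w₀)
      (by fun_prop) (by fun_prop)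
  have hset : (Iic r ∩ Ioo 0 1 : Set ℝ) =ᵐ[volume] Ioo 0 r := by
    rw [show Ioo 0 r = Iio r ∩ Ioo 0 1 by rw [Iio_inter_Ioo, min_eq_left hr.2]]
    exact (Iio_ae_eq_Iic (μ := volume) (a := r)).symm.inter (Filter.EventuallyEq.refl _ _)
  have hexp : (1 - P w₀) / P w₀ + 1 = 1 / P w₀ := by
    rw [div_add_one (hpos w₀).ne', sub_add_cancel]
  have ha : -1 < (1 - P w₀) / P w₀ := by linarith [one_div_pos.mpr (hpos w₀)]
  have hwins : gumbelWinsBelow P r w₀ = {x | (∀ w ≠ w₀, x w ∈ A w (x w₀)) ∧ x w₀ ∈ Iic r} :=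
    rfl
  rw [hwins, measure_pi_setOf_forall_ne_mem_and_mem _ w₀ hA measurableSet_Iic,
    Measure.restrict_restrict measurableSet_Iic, Measure.restrict_congr_set hset,
    setLIntegral_congr_fun measurableSet_Ioo fun u hu =>
      prod_volume_restrict_Ioo_setOf_log_div_lt hpos hsum w₀ ⟨hu.1, hu.2.trans_le hr.2⟩,
    lintegral_Ioo_ofReal_rpow ha hr.1, hexp, div_div_eq_mul_div, div_one, mul_comm]
end Gumbel

theorem gumbel_pivotal_cdf_general {W : Type*} [Fintype W] {Ω : Type*} [MeasurableSpace Ω]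
    (μ : Measure Ω)
    (P : W → ℝ) (hpos : ∀ w, 0 < P w) (hsum : ∑ w, P w = 1)
    (U : W → Ω → ℝ) (hmeas : ∀ w, Measurable (U w))
    (hindep : iIndepFun U μ)
    (hunif : ∀ w, Measure.map (U w) μ = volume.restrict (Set.Ioo (0:ℝ) 1))
    (r : ℝ) (hr : r ∈ Set.Icc (0:ℝ) 1) :
    μ {ω | ∃ w₀ : W,
        (∀ w, w ≠ w₀ → Real.log (U w ω) / P w < Real.log (U w₀ ω) / P w₀) ∧ U w₀ ω ≤ r}
      = ENNReal.ofReal (∑ w, P w * r ^ (1 / P w)) := by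
  have hlaw : μ.map (fun ω w => U w ω) = Measure.pi fun _ => volume.restrict (Ioo 0 1) := by
    rw [hindep.map_fun_eq_pi_map fun w => (hmeas w).aemeasurable]
    simp_rw [hunif]
  have hevent : {ω | ∃ w₀ : W,
      (∀ w, w ≠ w₀ → log (U w ω) / P w < log (U w₀ ω) / P w₀) ∧ U w₀ ω ≤ r}
      = (fun ω w => U w ω) ⁻¹' ⋃ w₀, gumbelWinsBelow P r w₀ := by
    ext ω; simp [gumbelWinsBelow]
  rw [hevent, ← Measure.map_apply (measurable_pi_lambda _ hmeas)
      (.iUnion (measurableSet_gumbelWinsBelow P r)), hlaw,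
    measure_iUnion (pairwise_disjoint_gumbelWinsBelow P r) (measurableSet_gumbelWinsBelow P r),
    tsum_fintype,
    ENNReal.ofReal_sum_of_nonneg fun w _ => mul_nonneg (hpos w).le (rpow_nonneg hr.1 _)]
  exact Finset.sum_congr rfl fun w₀ _ => measure_pi_uniform_gumbelWinsBelow hpos hsum hr w₀

/-- **Alternative distribution of the Gumbel-max pivotal statistic.**
Let `P` be a probability distribution with all `P w > 0` on a finite vocabulary,
`(U w)` i.i.d. `Uniform(0,1)`, `w*` the argmax of `log (U w) / P w`, and `Y = U w*`.
Then for every `r ∈ [0,1]`, `P(Y ≤ r) = ∑ w, P w * r ^ (1 / P w)`. -/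
theorem gumbel_pivotal_cdf {W : Type*} [Fintype W] {Ω : Type*} [MeasurableSpace Ω]
    (μ : Measure Ω) [IsProbabilityMeasure μ]
    (P : W → ℝ) (hpos : ∀ w, 0 < P w) (hsum : ∑ w, P w = 1)
    (U : W → Ω → ℝ) (hmeas : ∀ w, Measurable (U w))
    (hindep : iIndepFun U μ)
    (hunif : ∀ w, Measure.map (U w) μ = volume.restrict (Set.Ioo (0:ℝ) 1))
    (r : ℝ) (hr : r ∈ Set.Icc (0:ℝ) 1) :
    μ {ω | ∃ w₀ : W,
        (∀ w, w ≠ w₀ → Real.log (U w ω) / P w < Real.log (U w₀ ω) / P w₀) ∧ U w₀ ω ≤ r}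
      = ENNReal.ofReal (∑ w, P w * r ^ (1 / P w)) :=
  gumbel_pivotal_cdf_general μ P hpos hsum U hmeas hindep hunif r hr
end

section
/- The probability density function f_{1,P}(r) = Σ_{w∈W} r^{1/P_w − 1} of the Gumbel-max pivotal statistic satisfies ∫_0^1 f_{1,P}(r)² dr − 1 = Σ_{w,j∈W} P_w P_j (1−P_w)(1−P_j) / (1 − (1−P_w)(1−P_j)), where P = (P_w) is a probability distribution on a finite set W with all P_w > 0. -/
open MeasureTheory Real Set

/-- The chi-square identity for the density `f_{1,P}(r) = ∑_w r^{1/P_w − 1}` of the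
Gumbel-max pivotal statistic:
`∫₀¹ f_{1,P}(r)² dr − 1 = ∑_{w,j} P_w P_j (1−P_w)(1−P_j) / (1 − (1−P_w)(1−P_j))`. -/
theorem gumbel_density_chiSquare {W : Type*} [Fintype W]
    (P : W → ℝ) (hpos : ∀ w, 0 < P w) (hsum : ∑ w, P w = 1) :
    (∫ r in Set.Ioo (0:ℝ) 1, (∑ w, r ^ (1 / P w - 1)) ^ 2) - 1
      = ∑ w, ∑ j, P w * P j * ((1 - P w) * (1 - P j)) / (1 - (1 - P w) * (1 - P j)) := by
  classical
  have hle : ∀ w, P w ≤ 1 := by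
    intro w
    calc P w ≤ ∑ v, P v := Finset.single_le_sum (fun v _ => (hpos v).le) (Finset.mem_univ w)
    _ = 1 := hsum
  have hc : ∀ w j : W, (-1:ℝ) < 1 / P w - 1 + (1 / P j - 1) := by
    intro w j
    have h1 : (1:ℝ) ≤ 1 / P w := by
      rw [le_div_iff₀ (hpos w)]; simpa using hle w
    have h2 : (0:ℝ) < 1 / P j := div_pos one_pos (hpos j)
    linarith
  have hD : ∀ w j : W, 0 < P w + P j - P w * P j := by
    intro w j
    nlinarith [hpos w, hpos j, hle w, hle j]
  -- value of each integral
  have key : ∀ w j : W, (∫ r in Set.Ioo (0:ℝ) 1, r ^ (1 / P w - 1 + (1 / P j - 1)))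
      = P w * P j / (P w + P j - P w * P j) := by
    intro w j
    have hc1 : (0:ℝ) < 1 / P w - 1 + (1 / P j - 1) + 1 := by linarith [hc w j]
    rw [← MeasureTheory.integral_Ioc_eq_integral_Ioo,
      ← intervalIntegral.integral_of_le (zero_le_one),
      integral_rpow (Or.inl (hc w j))]
    rw [Real.one_rpow, Real.zero_rpow (ne_of_gt hc1)]
    have hw := (hpos w).ne'
    have hj := (hpos j).ne'
    field_simp
    ring
  -- pointwise expansion of the square
  have hsq : ∀ r ∈ Set.Ioo (0:ℝ) 1, (∑ w, r ^ (1 / P w - 1)) ^ 2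
      = ∑ w, ∑ j, r ^ (1 / P w - 1 + (1 / P j - 1)) := by
    intro r hr
    rw [sq, Finset.sum_mul_sum]
    exact Finset.sum_congr rfl fun w _ => Finset.sum_congr rfl fun j _ =>
      (Real.rpow_add hr.1 _ _).symm
  have hint : ∀ w j : W, IntegrableOn (fun r : ℝ => r ^ (1 / P w - 1 + (1 / P j - 1)))
      (Set.Ioo (0:ℝ) 1) := by
    intro w j
    have := (intervalIntegral.intervalIntegrable_rpow' (a := 0) (b := 1) (hc w j))
    exact ((intervalIntegrable_iff_integrableOn_Ioc_of_le zero_le_one).1 this).mono_set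
      Set.Ioo_subset_Ioc_self
  have hInt : (∫ r in Set.Ioo (0:ℝ) 1, (∑ w, r ^ (1 / P w - 1)) ^ 2)
      = ∑ w, ∑ j, P w * P j / (P w + P j - P w * P j) := by
    rw [MeasureTheory.setIntegral_congr_fun measurableSet_Ioo hsq,
      MeasureTheory.integral_finset_sum _ (fun w _ => integrable_finset_sum _ (fun j _ => hint w j))]
    refine Finset.sum_congr rfl fun w _ => ?_
    rw [MeasureTheory.integral_finset_sum _ (fun j _ => hint w j)]
    exact Finset.sum_congr rfl fun j _ => key w j
  rw [hInt]
  have h1 : (1:ℝ) = ∑ w, ∑ j, P w * P j := by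
    rw [← Finset.sum_mul_sum, hsum, one_mul]
  conv_lhs => rw [h1]
  rw [← Finset.sum_sub_distrib]
  refine Finset.sum_congr rfl fun w _ => ?_
  rw [← Finset.sum_sub_distrib]
  refine Finset.sum_congr rfl fun j _ => ?_
  have hDwj := (hD w j).ne'
  have : 1 - (1 - P w) * (1 - P j) = P w + P j - P w * P j := by ring
  rw [this]
  field_simp
  ring
end

section
/- Let P = (P_w)_{w∈W} be a probability distribution on a finite vocabulary W with all P_w > 0, f_{1,P}(r) = Σ_w r^{1/P_w − 1}, and P_max = max_w P_w. Then E_{Y∼Uniform(0,1)}[(f_{1,P}(Y) − 1)²] ≤ 4|W|·(1 − P_max). -/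
/-!
Writing `a_w = 1 / P_w - 1`, expanding the square and integrating the monomials `r ^ c` over
`(0, 1)` gives the exact value `∑_{v,w} (P_v⁻¹ + P_w⁻¹ - 1)⁻¹ - 1`. Each summand equals
`P_v P_w / (P_v + P_w - P_v P_w)`, whose denominator is at least `P_v`, so it exceeds `P_v P_w` by
at most `(1 - P_v) P_w (1 - P_w)`. Summing, the second moment is at most
`(|W| - 1) (1 - ∑ P_w²)`, and `1 - ∑ P_w² ≤ 1 - P_max² ≤ 2 (1 - P_max)`.
-/

open MeasureTheory Real Set

theorem integral_Ioo_zero_one_rpow {c : ℝ} (hc : -1 < c) :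
    ∫ r in Ioo (0 : ℝ) 1, r ^ c = (c + 1)⁻¹ := by
  rw [← integral_Ioc_eq_integral_Ioo, ← intervalIntegral.integral_of_le zero_le_one,
    integral_rpow (Or.inl hc), one_rpow, zero_rpow (by linarith), sub_zero, one_div]

theorem integrableOn_Ioo_zero_one_rpow {c : ℝ} (hc : -1 < c) :
    IntegrableOn (fun r : ℝ => r ^ c) (Ioo 0 1) :=
  (intervalIntegral.integrableOn_Ioo_rpow_iff zero_lt_one).2 hc

theorem sum_rpow_sub_one_sq {W : Type*} [Fintype W] (a : W → ℝ) {r : ℝ} (hr : 0 < r) :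
    (∑ w, r ^ a w - 1) ^ 2 = ∑ v, ∑ w, r ^ (a v + a w) - 2 * ∑ w, r ^ a w + 1 := by
  rw [sub_sq, sq, Finset.sum_mul_sum]
  simp only [rpow_add hr]
  ring

theorem integral_Ioo_zero_one_sum_rpow_sub_one_sq {W : Type*} [Fintype W] {a : W → ℝ}
    (ha : ∀ w, -1 / 2 < a w) :
    ∫ r in Ioo (0 : ℝ) 1, (∑ w, r ^ a w - 1) ^ 2
      = ∑ v, ∑ w, (a v + a w + 1)⁻¹ - 2 * ∑ w, (a w + 1)⁻¹ + 1 := by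
  have hpair : ∀ v w, -1 < a v + a w := fun v w => by linarith [ha v, ha w]
  have hsingle : ∀ w, -1 < a w := fun w => by linarith [ha w]
  have hint₂ : IntegrableOn (fun r : ℝ => ∑ v, ∑ w, r ^ (a v + a w)) (Ioo 0 1) :=
    integrable_finsetSum _ fun v _ => integrable_finsetSum _ fun w _ =>
      integrableOn_Ioo_zero_one_rpow (hpair v w)
  have hint₁ : IntegrableOn (fun r : ℝ => 2 * ∑ w, r ^ a w) (Ioo 0 1) :=
    (integrable_finsetSum _ fun w _ => integrableOn_Ioo_zero_one_rpow (hsingle w)).const_mul 2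
  have hint : IntegrableOn (fun r : ℝ => ∑ v, ∑ w, r ^ (a v + a w) - 2 * ∑ w, r ^ a w)
      (Ioo 0 1) := hint₂.sub hint₁
  rw [setIntegral_congr_fun measurableSet_Ioo fun r hr => sum_rpow_sub_one_sq a hr.1,
    integral_add hint (integrableOn_const measure_Ioo_lt_top.ne),
    integral_sub hint₂ hint₁, integral_const_mul,
    integral_finsetSum _ fun v _ => integrable_finsetSum _ fun w _ =>
      integrableOn_Ioo_zero_one_rpow (hpair v w),
    integral_finsetSum _ fun w _ => integrableOn_Ioo_zero_one_rpow (hsingle w)]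
  simp only [integral_finsetSum _ fun w _ => integrableOn_Ioo_zero_one_rpow (hpair _ w),
    integral_Ioo_zero_one_rpow (hpair _ _), integral_Ioo_zero_one_rpow (hsingle _)]
  simp

theorem inv_add_inv_sub_one_inv_le {x y : ℝ} (hx : 0 < x) (hx1 : x ≤ 1) (hy : 0 < y)
    (hy1 : y ≤ 1) :
    (x⁻¹ + y⁻¹ - 1)⁻¹ ≤ x * y + (1 - x) * (y * (1 - y)) := by
  have hD : x ≤ x + y - x * y := by nlinarith
  have hrw : x⁻¹ + y⁻¹ - 1 = (x + y - x * y) / (x * y) := by field_simp; ring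
  rw [hrw, inv_div, div_le_iff₀ (by linarith)]
  nlinarith [mul_nonneg (mul_nonneg hy.le (sub_nonneg.2 hy1)) (sub_nonneg.2 hx1),
    mul_nonneg (mul_nonneg (mul_nonneg hy.le (sub_nonneg.2 hy1)) (sub_nonneg.2 hx1))
      (sub_nonneg.2 hD)]

theorem one_sub_sum_sq_le_two_mul_one_sub_sup' {W : Type*} [Fintype W] [Nonempty W]
    (P : W → ℝ) :
    1 - ∑ w, P w ^ 2 ≤ 2 * (1 - Finset.univ.sup' Finset.univ_nonempty P) := by
  obtain ⟨m, -, hm⟩ := Finset.exists_mem_eq_sup' Finset.univ_nonempty P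
  have hsq : P m ^ 2 ≤ ∑ w, P w ^ 2 :=
    Finset.single_le_sum (fun w _ => sq_nonneg (P w)) (Finset.mem_univ m)
  rw [hm]
  nlinarith [sq_nonneg (1 - P m)]

/-- Second-moment bound for the Gumbel-max density deviation:
`E_{Y∼U(0,1)}[(f_{1,P}(Y) − 1)²] ≤ 4 |W| (1 − P_max)`. -/
theorem gumbel_density_second_moment_le {W : Type*} [Fintype W] [Nonempty W]
    (P : W → ℝ) (hpos : ∀ w, 0 < P w) (hsum : ∑ w, P w = 1) :
    (∫ r in Set.Ioo (0:ℝ) 1, ((∑ w, r ^ (1 / P w - 1)) - 1) ^ 2)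
      ≤ 4 * (Fintype.card W : ℝ) * (1 - Finset.univ.sup' Finset.univ_nonempty P) := by
  have hP1 : ∀ w, P w ≤ 1 := fun w =>
    hsum ▸ Finset.single_le_sum (fun v _ => (hpos v).le) (Finset.mem_univ w)
  have hexp : ∀ w, -1 / 2 < 1 / P w - 1 := fun w => by
    linarith [(one_le_div (hpos w)).2 (hP1 w)]
  have hgini : 0 ≤ 1 - ∑ w, P w ^ 2 := by
    rw [← hsum, sub_nonneg]
    exact Finset.sum_le_sum fun w _ => by nlinarith [hpos w, hP1 w]
  have hmax := mul_le_mul_of_nonneg_left (one_sub_sum_sq_le_two_mul_one_sub_sup' P)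
    (Nat.cast_nonneg (Fintype.card W) : (0 : ℝ) ≤ Fintype.card W)
  rw [integral_Ioo_zero_one_sum_rpow_sub_one_sq hexp]
  calc _ ≤ ∑ v, ∑ w, (P v * P w + (1 - P v) * (P w * (1 - P w))) - 2 * ∑ w, P w + 1 := by
        simp only [one_div, sub_add_cancel, inv_inv]
        gcongr with v _ w _
        rw [show (P v)⁻¹ - 1 + ((P w)⁻¹ - 1) + 1 = (P v)⁻¹ + (P w)⁻¹ - 1 by ring]
        exact inv_add_inv_sub_one_inv_le (hpos v) (hP1 v) (hpos w) (hP1 w)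
    _ = (Fintype.card W - 1) * (1 - ∑ w, P w ^ 2) := by
        simp only [Finset.sum_add_distrib, ← Finset.sum_mul_sum, hsum, Finset.sum_sub_distrib,
          mul_sub, Finset.sum_const, Finset.card_univ, nsmul_eq_mul, mul_one, sq]
        ring
    _ ≤ 4 * Fintype.card W * (1 - Finset.univ.sup' Finset.univ_nonempty P) := by
        nlinarith
end

section
/- For any two probability distributions P¹, P² on a finite vocabulary W such that max_w P¹_w ≤ 1−Δ and max_w P²_w ≤ 1−Δ for some Δ ∈ (0, 1/2), we have Σ_{w,j∈W} min(P¹_w, P²_j)·(1−P¹_w)(1−P²_j) ≥ Δ(1−Δ)² + 3Δ²(1−Δ). -/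
open Finset

private lemma factA {W : Type*} [Fintype W] {Δ : ℝ} (hΔ0 : 0 < Δ)
    {P : W → ℝ} (hpos : ∀ w, 0 ≤ P w) (hsum : ∑ w, P w = 1)
    (hreg : ∀ w, P w ≤ 1 - Δ) {y : ℝ} (hy0 : 0 ≤ y) (hy1 : y ≤ 1 - Δ) :
    y + min y Δ ≤ ∑ w, min (P w) y := by
  classical
  have hsplit : ∑ w, min (P w) y
      = ((univ.filter (fun w => y < P w)).card : ℝ) * y
        + ∑ w ∈ univ.filter (fun w => ¬ y < P w), P w := by
    rw [← sum_filter_add_sum_filter_not univ (fun w => y < P w)]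
    congr 1
    · rw [sum_congr rfl (fun w hw => min_eq_right (le_of_lt (mem_filter.mp hw).2)),
        sum_const, nsmul_eq_mul]
    · exact sum_congr rfl fun w hw => min_eq_left (not_lt.mp (mem_filter.mp hw).2)
  have hcompl : ∑ w ∈ univ.filter (fun w => y < P w), P w
      + ∑ w ∈ univ.filter (fun w => ¬ y < P w), P w = 1 := by
    rw [sum_filter_add_sum_filter_not]; exact hsum
  have hminyΔ : min y Δ ≤ Δ := min_le_right _ _
  have hminyy : min y Δ ≤ y := min_le_left _ _
  rcases Nat.lt_or_ge (univ.filter (fun w => y < P w)).card 2 with h2 | h2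
  · have h01 : (univ.filter (fun w => y < P w)).card = 0
        ∨ (univ.filter (fun w => y < P w)).card = 1 := by omega
    rcases h01 with h0 | h1
    · have he : univ.filter (fun w => y < P w) = ∅ := card_eq_zero.mp h0
      rw [he, sum_empty, zero_add] at hcompl
      rw [hsplit, he]
      simp only [card_empty, Nat.cast_zero, zero_mul, zero_add]
      rw [hcompl]
      linarith
    · obtain ⟨u, hu⟩ := card_eq_one.mp h1
      have hPu : ∑ w ∈ univ.filter (fun w => y < P w), P w = P u := by
        rw [hu, sum_singleton]
      rw [hPu] at hcompl
      rw [hsplit, h1]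
      have : P u ≤ 1 - Δ := hreg u
      push_cast
      linarith
  · have hcard : (2 : ℝ) ≤ ((univ.filter (fun w => y < P w)).card : ℝ) := by
      exact_mod_cast h2
    have hnn : 0 ≤ ∑ w ∈ univ.filter (fun w => ¬ y < P w), P w :=
      sum_nonneg fun w _ => hpos w
    rw [hsplit]
    nlinarith
    
private lemma lemB {W : Type*} [Fintype W] [DecidableEq W] {Δ : ℝ} (hΔ0 : 0 < Δ)
    {P : W → ℝ} (hpos : ∀ w, 0 ≤ P w) (hsum : ∑ w, P w = 1)
    {w₁ : W} (hmax : ∀ w, P w ≤ P w₁) (hreg1 : P w₁ ≤ 1 - Δ)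
    {G : W → ℝ} (hG0 : ∀ w, 0 ≤ G w) (hG1 : ∀ w, G w ≤ G w₁) :
    Δ * G w₁ + (1 - Δ) * ∑ w ∈ univ.erase w₁, G w ≤ ∑ w, (1 - P w) * G w := by
  classical
  have herase : ∑ w ∈ univ.erase w₁, P w = 1 - P w₁ := by
    have h := Finset.add_sum_erase univ P (mem_univ w₁)
    rw [hsum] at h
    linarith
  have hC : ∑ w ∈ univ.erase w₁, max (P w - Δ) 0 ≤ 1 - Δ - P w₁ := by
    have hsplit : ∑ w ∈ univ.erase w₁, max (P w - Δ) 0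
        = ∑ w ∈ (univ.erase w₁).filter (fun w => Δ < P w), (P w - Δ) := by
      rw [← sum_filter_add_sum_filter_not (univ.erase w₁) (fun w => Δ < P w)]
      have h1 : ∀ w ∈ (univ.erase w₁).filter (fun w => Δ < P w),
          max (P w - Δ) 0 = P w - Δ := fun w hw =>
        max_eq_left (by linarith [(mem_filter.mp hw).2])
      have h2 : ∀ w ∈ (univ.erase w₁).filter (fun w => ¬ Δ < P w),
          max (P w - Δ) 0 = 0 := fun w hw =>
        max_eq_right (by linarith [not_lt.mp (mem_filter.mp hw).2])
      rw [sum_congr rfl h1, sum_congr rfl h2, sum_const_zero, add_zero]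
    rw [hsplit]
    rcases ((univ.erase w₁).filter (fun w => Δ < P w)).eq_empty_or_nonempty with he | hne
    · rw [he, sum_empty]; linarith
    · have hsub : ∑ w ∈ (univ.erase w₁).filter (fun w => Δ < P w), P w
          ≤ 1 - P w₁ := by
        rw [← herase]
        exact sum_le_sum_of_subset_of_nonneg (filter_subset _ _)
          (fun w _ _ => hpos w)
      have hcard : (1 : ℝ) ≤ (((univ.erase w₁).filter (fun w => Δ < P w)).card : ℝ) := by
        have := Finset.card_pos.mpr hne
        exact_mod_cast this
      have hrw : ∑ w ∈ (univ.erase w₁).filter (fun w => Δ < P w), (P w - Δ)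
          = (∑ w ∈ (univ.erase w₁).filter (fun w => Δ < P w), P w)
            - (((univ.erase w₁).filter (fun w => Δ < P w)).card : ℝ) * Δ := by
        rw [sum_sub_distrib, sum_const, nsmul_eq_mul]
      rw [hrw]
      nlinarith
  have hterm : ∀ w ∈ univ.erase w₁, (P w - Δ) * G w ≤ max (P w - Δ) 0 * G w₁ := by
    intro w _
    rcases le_or_gt (P w - Δ) 0 with h | h
    · calc (P w - Δ) * G w ≤ 0 := mul_nonpos_of_nonpos_of_nonneg h (hG0 w)
        _ ≤ max (P w - Δ) 0 * G w₁ :=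
          mul_nonneg (le_max_right _ _) (hG0 w₁)
    · rw [max_eq_left h.le]
      exact mul_le_mul_of_nonneg_left (hG1 w) h.le
  have hkey : ∑ w ∈ univ.erase w₁, (P w - Δ) * G w ≤ (1 - Δ - P w₁) * G w₁ := by
    calc ∑ w ∈ univ.erase w₁, (P w - Δ) * G w
        ≤ ∑ w ∈ univ.erase w₁, max (P w - Δ) 0 * G w₁ := sum_le_sum hterm
      _ = (∑ w ∈ univ.erase w₁, max (P w - Δ) 0) * G w₁ := (sum_mul _ _ _).symm
      _ ≤ (1 - Δ - P w₁) * G w₁ := mul_le_mul_of_nonneg_right hC (hG0 w₁)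
  have hdecomp : ∑ w, (1 - P w) * G w
      = (1 - P w₁) * G w₁ + ∑ w ∈ univ.erase w₁, (1 - P w) * G w :=
    (Finset.add_sum_erase univ (fun w => (1 - P w) * G w) (mem_univ w₁)).symm
  have hexp : ∑ w ∈ univ.erase w₁, (1 - P w) * G w
      = (1 - Δ) * (∑ w ∈ univ.erase w₁, G w)
        - ∑ w ∈ univ.erase w₁, (P w - Δ) * G w := by
    rw [mul_sum, ← sum_sub_distrib]
    exact sum_congr rfl fun w _ => by ring
  linarith [hkey, hdecomp, hexp]

/-- Lower bound for the cross term over the `Δ`-regular class: for probability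
distributions `P¹, P²` with all entries at most `1−Δ`, `Δ ∈ (0, 1/2)`,
`∑_{w,j} min(P¹_w, P²_j)(1−P¹_w)(1−P²_j) ≥ Δ(1−Δ)² + 3Δ²(1−Δ)`. -/
theorem cross_term_lower_bound {W : Type*} [Fintype W]
    (Δ : ℝ) (hΔ0 : 0 < Δ) (hΔhalf : Δ < 1 / 2)
    (P₁ P₂ : W → ℝ)
    (h1pos : ∀ w, 0 ≤ P₁ w) (h2pos : ∀ w, 0 ≤ P₂ w)
    (h1sum : ∑ w, P₁ w = 1) (h2sum : ∑ w, P₂ w = 1)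
    (h1reg : ∀ w, P₁ w ≤ 1 - Δ) (h2reg : ∀ w, P₂ w ≤ 1 - Δ) :
    Δ * (1 - Δ) ^ 2 + 3 * Δ ^ 2 * (1 - Δ)
      ≤ ∑ w, ∑ j, min (P₁ w) (P₂ j) * ((1 - P₁ w) * (1 - P₂ j)) := by
  classical
  have hne : (univ : Finset W).Nonempty := by
    rcases (univ : Finset W).eq_empty_or_nonempty with h | h
    · rw [h, sum_empty] at h1sum; norm_num at h1sum
    · exact h
  obtain ⟨w₁, -, hw₁'⟩ := exists_max_image univ P₁ hne
  obtain ⟨j₁, -, hj₁'⟩ := exists_max_image univ P₂ hne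
  have hw₁ : ∀ w, P₁ w ≤ P₁ w₁ := fun w => hw₁' w (mem_univ w)
  have hj₁ : ∀ j, P₂ j ≤ P₂ j₁ := fun j => hj₁' j (mem_univ j)
  -- inner bound, per j
  have hinner : ∀ j, Δ * P₂ j + (1 - Δ) * min (P₂ j) Δ
      ≤ ∑ w, (1 - P₁ w) * min (P₁ w) (P₂ j) := by
    intro j
    have hB := lemB hΔ0 h1pos h1sum hw₁ (h1reg w₁)
      (G := fun w => min (P₁ w) (P₂ j))
      (fun w => le_min (h1pos w) (h2pos j))
      (fun w => min_le_min (hw₁ w) le_rfl)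
    have hA := factA hΔ0 h1pos h1sum h1reg (h2pos j) (h2reg j)
    have hsplitm : ∑ w, min (P₁ w) (P₂ j)
        = min (P₁ w₁) (P₂ j) + ∑ w ∈ univ.erase w₁, min (P₁ w) (P₂ j) :=
      (Finset.add_sum_erase univ (fun w => min (P₁ w) (P₂ j)) (mem_univ w₁)).symm
    have hsplitm' : (1 - Δ) * ∑ w ∈ univ.erase w₁, min (P₁ w) (P₂ j)
        = (1 - Δ) * ∑ w, min (P₁ w) (P₂ j)
          - (1 - Δ) * min (P₁ w₁) (P₂ j) := by
      rw [hsplitm]; ring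
    have hm : min (P₁ w₁) (P₂ j) ≤ P₂ j := min_le_right _ _
    have f1 : (1 - Δ) * (P₂ j + min (P₂ j) Δ) ≤ (1 - Δ) * ∑ w, min (P₁ w) (P₂ j) :=
      mul_le_mul_of_nonneg_left hA (by linarith)
    have f2 : (1 - 2*Δ) * min (P₁ w₁) (P₂ j) ≤ (1 - 2*Δ) * P₂ j :=
      mul_le_mul_of_nonneg_left hm (by linarith)
    nlinarith [hB, hsplitm', f1, f2]
  -- rearrange the double sum
  have hswap : ∑ w, ∑ j, min (P₁ w) (P₂ j) * ((1 - P₁ w) * (1 - P₂ j))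
      = ∑ j, (1 - P₂ j) * ∑ w, (1 - P₁ w) * min (P₁ w) (P₂ j) := by
    rw [Finset.sum_comm]
    exact sum_congr rfl fun j _ => by
      rw [mul_sum]; exact sum_congr rfl fun w _ => by ring
  rw [hswap]
  set g : W → ℝ := fun j => Δ * P₂ j + (1 - Δ) * min (P₂ j) Δ with hg
  have hstep : ∑ j, (1 - P₂ j) * g j
      ≤ ∑ j, (1 - P₂ j) * ∑ w, (1 - P₁ w) * min (P₁ w) (P₂ j) :=
    sum_le_sum fun j _ =>
      mul_le_mul_of_nonneg_left (hinner j) (by linarith [h2reg j])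
  have hG0 : ∀ j, 0 ≤ g j := fun j => add_nonneg (mul_nonneg hΔ0.le (h2pos j))
    (mul_nonneg (by linarith) (le_min (h2pos j) hΔ0.le))
  have hG1 : ∀ j, g j ≤ g j₁ := fun j => add_le_add
    (mul_le_mul_of_nonneg_left (hj₁ j) hΔ0.le)
    (mul_le_mul_of_nonneg_left (min_le_min (hj₁ j) le_rfl) (by linarith))
  have hB2 := lemB hΔ0 h2pos h2sum hj₁ (h2reg j₁) hG0 hG1
  have he1 : ∑ j ∈ univ.erase j₁, P₂ j = 1 - P₂ j₁ := by
    have h := Finset.add_sum_erase univ P₂ (mem_univ j₁)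
    rw [h2sum] at h; linarith
  have he2 : ∑ j ∈ univ.erase j₁, min (P₂ j) Δ
      = (∑ j, min (P₂ j) Δ) - min (P₂ j₁) Δ := by
    have h := Finset.add_sum_erase univ (fun j => min (P₂ j) Δ) (mem_univ j₁)
    linarith
  have hS : 2 * Δ ≤ ∑ j, min (P₂ j) Δ := by
    have h := factA hΔ0 h2pos h2sum h2reg (y := Δ) hΔ0.le (by linarith)
    rw [min_self] at h
    linarith
  have hgsum : ∑ j ∈ univ.erase j₁, g j
      = Δ * (1 - P₂ j₁) + (1 - Δ) * ((∑ j, min (P₂ j) Δ) - min (P₂ j₁) Δ) := by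
    simp only [hg]
    rw [sum_add_distrib, ← mul_sum, ← mul_sum, he1, he2]
  have hq1 : P₂ j₁ ≤ 1 - Δ := h2reg j₁
  have hm1 : min (P₂ j₁) Δ ≤ Δ := min_le_right _ _
  have hm1' : 0 ≤ min (P₂ j₁) Δ := le_min (h2pos j₁) hΔ0.le
  have hfinal : Δ * (1 - Δ) ^ 2 + 3 * Δ ^ 2 * (1 - Δ)
      ≤ Δ * g j₁ + (1 - Δ) * ∑ j ∈ univ.erase j₁, g j := by
    rw [hgsum]
    simp only [hg]
    have hp1 : (1 - Δ)^2 * (2 * Δ) ≤ (1 - Δ)^2 * ∑ j, min (P₂ j) Δ :=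
      mul_le_mul_of_nonneg_left hS (sq_nonneg _)
    have hp2 : Δ * (1 - 2*Δ) * P₂ j₁ ≤ Δ * (1 - 2*Δ) * (1 - Δ) :=
      mul_le_mul_of_nonneg_left hq1 (by nlinarith)
    have hp3 : (1 - Δ) * (1 - 2*Δ) * min (P₂ j₁) Δ ≤ (1 - Δ) * (1 - 2*Δ) * Δ :=
      mul_le_mul_of_nonneg_left hm1 (by nlinarith)
    nlinarith [hp1, hp2, hp3]
  linarith [hfinal, hB2, hstep]
end

section
/- For every x ≥ 1, the trigamma function satisfies 1/(x + 1/(π²/6 − 1) − 1) ≤ ψ'(1+x) ≤ 1/(x + 1/2), and consequently (π²/6 − 1)·log x ≤ ψ(1+x) − ψ(2) ≤ log x. -/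
open Real

/-- The digamma function `ψ(x) = −γ + ∑_{j≥0} (1/(j+1) − 1/(j+x))`. -/
noncomputable def digamma (x : ℝ) : ℝ :=
  -Real.eulerMascheroniConstant + ∑' j : ℕ, (1 / ((j : ℝ) + 1) - 1 / ((j : ℝ) + x))

/-- The trigamma function `ψ'(x) = ∑_{j≥0} 1/(j+x)²`. -/
noncomputable def trigamma (x : ℝ) : ℝ := ∑' j : ℕ, 1 / ((j : ℝ) + x) ^ 2

/-!
The upper bound telescopes: `1 / s ^ 2 ≤ 1 / (s - 1/2) - 1 / (s + 1/2)`. For the lower bound,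
`1 / ψ'` has slope `-ψ'' / ψ'² ≤ 1` on `[2, ∞)`; the inequality `-ψ'' ≤ ψ'²` follows by squeezing
both sides between truncated Euler–Maclaurin expansions, each proved by telescoping. Since
`ψ'(2) = π²/6 - 1`, integrating from `2` gives the lower bound. The digamma bounds are the
integrals from `1` to `x` of the trigamma bounds, using `ψ'(1 + t) ≤ 1 / t` and
`(π²/6 - 1) / t ≤ 1 / (t + 1 / (π²/6 - 1) - 1)`.
-/

open Filter Set Topology

lemma summable_one_div_add_pow {y : ℝ} (hy : 0 < y) {k : ℕ} (hk : 2 ≤ k) :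
    Summable fun n : ℕ => 1 / ((n : ℝ) + y) ^ k := by
  have h := (Real.summable_one_div_nat_add_rpow y k).2 (by exact_mod_cast hk)
  refine h.congr fun n => ?_
  rw [abs_of_pos (by positivity), Real.rpow_natCast]

section Telescoping

variable {F : ℝ → ℝ} {g : ℕ → ℝ} {y : ℝ}

lemma le_tsum_of_sub_add_one_le (hF : Tendsto F atTop (𝓝 0)) (hg : Summable g)
    (h : ∀ n : ℕ, F (n + y) - F (n + y + 1) ≤ g n) : F y ≤ ∑' n, g n := by
  have hFy : Tendsto (fun N : ℕ => F (N + y)) atTop (𝓝 0) :=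
    hF.comp (tendsto_atTop_add_const_right _ y tendsto_natCast_atTop_atTop)
  have partial_sum (N : ℕ) : F y - F (N + y) ≤ ∑ n ∈ Finset.range N, g n :=
    calc F y - F (N + y) = ∑ n ∈ Finset.range N, (F (n + y) - F ((n + 1 : ℕ) + y)) := by
          rw [Finset.sum_range_sub' (fun n : ℕ => F (n + y))]; simp
      _ = ∑ n ∈ Finset.range N, (F (n + y) - F (n + y + 1)) := by
          simp only [Nat.cast_succ, add_right_comm]
      _ ≤ ∑ n ∈ Finset.range N, g n := Finset.sum_le_sum fun n _ => h n
  simpa using le_of_tendsto_of_tendsto' (tendsto_const_nhds.sub hFy) hg.hasSum.tendsto_sum_nat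
    partial_sum

lemma tsum_le_of_le_sub_add_one (hF : Tendsto F atTop (𝓝 0)) (hg : Summable g)
    (h : ∀ n : ℕ, g n ≤ F (n + y) - F (n + y + 1)) : ∑' n, g n ≤ F y := by
  have := le_tsum_of_sub_add_one_le (F := fun t => -F t) (y := y) (by simpa using hF.neg) hg.neg
    fun n => by linarith [h n]
  simpa [tsum_neg] using this

end Telescoping

lemma sub_le_sub_of_hasDerivAt_le {f g f' g' : ℝ → ℝ} {a b : ℝ} (hab : a ≤ b)
    (hf : ∀ t ∈ Icc a b, HasDerivAt f (f' t) t) (hg : ∀ t ∈ Icc a b, HasDerivAt g (g' t) t)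
    (h : ∀ t ∈ Icc a b, f' t ≤ g' t) : f b - f a ≤ g b - g a := by
  have hd : ∀ t ∈ Icc a b, HasDerivAt (g - f) (g' t - f' t) t := fun t ht =>
    (hg t ht).sub (hf t ht)
  have hmono : MonotoneOn (g - f) (Icc a b) :=
    monotoneOn_of_hasDerivWithinAt_nonneg (convex_Icc a b)
      (fun t ht => (hd t ht).continuousAt.continuousWithinAt)
      (fun t ht => (hd t (interior_subset ht)).hasDerivWithinAt)
      (fun t ht => sub_nonneg.2 (h t (interior_subset ht)))
  have := hmono (left_mem_Icc.2 hab) (right_mem_Icc.2 hab) hab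
  simp only [Pi.sub_apply] at this
  linarith

noncomputable def tetragamma (x : ℝ) : ℝ := -∑' j : ℕ, 2 / ((j : ℝ) + x) ^ 3

lemma trigamma_pos {y : ℝ} (hy : 0 < y) : 0 < trigamma y :=
  (summable_one_div_add_pow hy le_rfl).tsum_pos (fun n => by positivity) 0 (by positivity)

lemma trigamma_two : trigamma 2 = π ^ 2 / 6 - 1 := by
  have h := (hasSum_nat_add_iff' 2).2 hasSum_zeta_two
  norm_num [Finset.sum_range_succ] at h
  simpa [trigamma, one_div] using h.tsum_eq

lemma hasDerivAt_trigamma {x : ℝ} (hx : 0 < x) : HasDerivAt trigamma (tetragamma x) x := by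
  have hc : 0 < x / 2 := by positivity
  have key := hasDerivAt_tsum_of_isPreconnected (t := Ioi (x / 2)) (y₀ := x)
    (g := fun (n : ℕ) (z : ℝ) => 1 / ((n : ℝ) + z) ^ 2)
    (g' := fun (n : ℕ) (z : ℝ) => -(2 / ((n : ℝ) + z) ^ 3))
    ((summable_one_div_add_pow hc (k := 3) (by norm_num)).mul_left 2) isOpen_Ioi
    isPreconnected_Ioi (fun n z hz => ?_) (fun n z hz => ?_) (half_lt_self hx)
    (summable_one_div_add_pow hx le_rfl) (half_lt_self hx)
  · unfold tetragamma; rw [← tsum_neg]; exact key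
  · have hnz : (0 : ℝ) < n + z := by have : 0 < z := hc.trans hz; positivity
    have hsq : HasDerivAt (fun z => ((n : ℝ) + z) ^ 2) (2 * (n + z)) z := by
      simpa using ((hasDerivAt_id z).const_add (n : ℝ)).fun_pow 2
    simp only [one_div]
    refine (hsq.inv (pow_ne_zero 2 hnz.ne')).congr_deriv ?_
    field_simp
  · have hnz : (0 : ℝ) < n + z := by have : 0 < z := hc.trans hz; positivity
    rw [norm_neg, Real.norm_of_nonneg (by positivity), mul_one_div]
    gcongr
    exact le_of_lt hz

lemma hasDerivAt_digamma {x : ℝ} (hx : 0 < x) : HasDerivAt digamma (trigamma x) x := by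
  obtain ⟨c, hc, hcx, hc1⟩ : ∃ c : ℝ, 0 < c ∧ c < x ∧ c < 1 :=
    ⟨min x 1 / 2, by positivity, by linarith [min_le_left x 1], by linarith [min_le_right x 1]⟩
  have key := hasDerivAt_tsum_of_isPreconnected (t := Ioi c) (y₀ := 1)
    (g := fun (n : ℕ) (z : ℝ) => 1 / ((n : ℝ) + 1) - 1 / ((n : ℝ) + z))
    (g' := fun (n : ℕ) (z : ℝ) => 1 / ((n : ℝ) + z) ^ 2)
    (summable_one_div_add_pow hc le_rfl) isOpen_Ioi isPreconnected_Ioi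
    (fun n z hz => ?_) (fun n z hz => ?_) hc1 (by simp [summable_zero]) hcx
  · exact key.const_add _
  · have hnz : (0 : ℝ) < n + z := by have : 0 < z := hc.trans hz; positivity
    simpa [one_div] using ((hasDerivAt_inv hnz.ne').comp_const_add (n : ℝ) z).const_sub _
  · have hnz : (0 : ℝ) < n + z := by have : 0 < z := hc.trans hz; positivity
    rw [Real.norm_of_nonneg (by positivity)]
    gcongr
    exact le_of_lt hz

lemma trigamma_le_inv_sub_half {y : ℝ} (hy : 1 / 2 < y) : trigamma y ≤ (y - 1 / 2)⁻¹ := by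
  have hF : Tendsto (fun t : ℝ => (t - 1 / 2)⁻¹) atTop (𝓝 0) :=
    tendsto_inv_atTop_zero.comp (tendsto_atTop_add_const_right _ _ tendsto_id)
  refine (tsum_le_of_le_sub_add_one hF (summable_one_div_add_pow (by linarith) le_rfl)
    fun n => ?_ :)
  have hs : 1 / 2 < (n : ℝ) + y := by have := n.cast_nonneg (α := ℝ); linarith
  rw [inv_sub_inv (by linarith) (by linarith), div_le_div_iff₀ (by positivity) (by nlinarith)]
  nlinarith

lemma le_trigamma {y : ℝ} (hy : 0 < y) :
    y⁻¹ + y⁻¹ ^ 2 / 2 + y⁻¹ ^ 3 / 6 - y⁻¹ ^ 5 / 30 ≤ trigamma y := by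
  have hF : Tendsto (fun t : ℝ => t⁻¹ + t⁻¹ ^ 2 / 2 + t⁻¹ ^ 3 / 6 - t⁻¹ ^ 5 / 30) atTop (𝓝 0) := by
    have h := tendsto_inv_atTop_zero (𝕜 := ℝ)
    simpa using (((h.add (h.pow 2 |>.div_const 2)).add (h.pow 3 |>.div_const 6)).sub
      (h.pow 5 |>.div_const 30))
  refine (le_tsum_of_sub_add_one_le hF (summable_one_div_add_pow hy le_rfl) fun n => ?_ :)
  have hs : 0 < (n : ℝ) + y := by positivity
  generalize (n : ℝ) + y = s at hs ⊢
  have key : 1 / s ^ 2 - ((s⁻¹ + s⁻¹ ^ 2 / 2 + s⁻¹ ^ 3 / 6 - s⁻¹ ^ 5 / 30) -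
      ((s + 1)⁻¹ + (s + 1)⁻¹ ^ 2 / 2 + (s + 1)⁻¹ ^ 3 / 6 - (s + 1)⁻¹ ^ 5 / 30)) =
      (5 * s ^ 2 + 5 * s + 1) / (30 * s ^ 5 * (s + 1) ^ 5) := by
    field_simp; ring
  have : 0 ≤ (5 * s ^ 2 + 5 * s + 1) / (30 * s ^ 5 * (s + 1) ^ 5) := by positivity
  linarith

lemma neg_tetragamma_le {y : ℝ} (hy : 0 < y) :
    -tetragamma y ≤ y⁻¹ ^ 2 + y⁻¹ ^ 3 + y⁻¹ ^ 4 / 2 := by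
  have hF : Tendsto (fun t : ℝ => t⁻¹ ^ 2 + t⁻¹ ^ 3 + t⁻¹ ^ 4 / 2) atTop (𝓝 0) := by
    have h := tendsto_inv_atTop_zero (𝕜 := ℝ)
    simpa using ((h.pow 2).add (h.pow 3)).add (h.pow 4 |>.div_const 2)
  rw [tetragamma, neg_neg]
  refine (tsum_le_of_le_sub_add_one hF
    ((summable_one_div_add_pow hy (k := 3) (by norm_num)).mul_left 2 |>.congr fun n => ?_)
    fun n => ?_ :)
  · ring
  have hs : 0 < (n : ℝ) + y := by positivity
  generalize (n : ℝ) + y = s at hs ⊢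
  have key : (s⁻¹ ^ 2 + s⁻¹ ^ 3 + s⁻¹ ^ 4 / 2) - ((s + 1)⁻¹ ^ 2 + (s + 1)⁻¹ ^ 3 + (s + 1)⁻¹ ^ 4 / 2)
      - 2 / s ^ 3 = (2 * s + 1) / (2 * s ^ 4 * (s + 1) ^ 4) := by
    field_simp; ring
  have : 0 ≤ (2 * s + 1) / (2 * s ^ 4 * (s + 1) ^ 4) := by positivity
  linarith

lemma neg_tetragamma_le_trigamma_sq {y : ℝ} (hy : 2 ≤ y) : -tetragamma y ≤ trigamma y ^ 2 := by
  have hy0 : 0 < y := by linarith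
  set u := y⁻¹ with hu
  have hu0 : 0 < u := inv_pos.2 hy0
  have hu2 : u ≤ 1 / 2 := by rw [hu, one_div]; exact inv_anti₀ (by norm_num) hy
  have minorant_nonneg : 0 ≤ u + u ^ 2 / 2 + u ^ 3 / 6 - u ^ 5 / 30 := by
    nlinarith [pow_le_pow_left₀ hu0.le hu2 4, pow_pos hu0 4]
  have majorant_le : u ^ 2 + u ^ 3 + u ^ 4 / 2 ≤ (u + u ^ 2 / 2 + u ^ 3 / 6 - u ^ 5 / 30) ^ 2 := by
    nlinarith [pow_pos hu0 3, pow_pos hu0 4, pow_pos hu0 5, pow_pos hu0 6, pow_pos hu0 7,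
      pow_le_pow_left₀ hu0.le hu2 5, pow_le_pow_left₀ hu0.le hu2 6]
  calc -tetragamma y ≤ u ^ 2 + u ^ 3 + u ^ 4 / 2 := neg_tetragamma_le hy0
    _ ≤ (u + u ^ 2 / 2 + u ^ 3 / 6 - u ^ 5 / 30) ^ 2 := majorant_le
    _ ≤ trigamma y ^ 2 := pow_le_pow_left₀ minorant_nonneg (le_trigamma hy0) 2

lemma inv_trigamma_sub_inv_trigamma_le {y z : ℝ} (hz : 2 ≤ z) (hzy : z ≤ y) :
    (trigamma y)⁻¹ - (trigamma z)⁻¹ ≤ y - z := by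
  refine sub_le_sub_of_hasDerivAt_le (f := fun t => (trigamma t)⁻¹) (g := id)
    (f' := fun t => -tetragamma t / trigamma t ^ 2) (g' := fun _ => 1)
    hzy (fun t ht => ?_) (fun t _ => hasDerivAt_id t) fun t ht => ?_
  · exact (hasDerivAt_trigamma (by linarith [ht.1])).inv (trigamma_pos (by linarith [ht.1])).ne'
  · have := trigamma_pos (y := t) (by linarith [ht.1])
    exact div_le_one_of_le₀ (neg_tetragamma_le_trigamma_sq (hz.trans ht.1)) (by positivity)

lemma one_div_le_trigamma_one_add {x : ℝ} (hx : 1 ≤ x) :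
    1 / (x + 1 / (π ^ 2 / 6 - 1) - 1) ≤ trigamma (1 + x) := by
  have h := inv_trigamma_sub_inv_trigamma_le (z := 2) (y := 1 + x) le_rfl (by linarith)
  rw [trigamma_two] at h
  rw [one_div]
  exact inv_le_of_inv_le₀ (trigamma_pos (by linarith)) (by rw [one_div]; linarith)

lemma trigamma_one_add_le {x : ℝ} (hx : -1 / 2 < x) : trigamma (1 + x) ≤ 1 / (x + 1 / 2) := by
  convert trigamma_le_inv_sub_half (y := 1 + x) (by linarith) using 1
  rw [one_div]; ring_nf

lemma hasDerivAt_digamma_one_add {t : ℝ} (ht : -1 < t) :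
    HasDerivAt (fun s => digamma (1 + s)) (trigamma (1 + t)) t :=
  (hasDerivAt_digamma (by linarith)).comp_const_add 1 t

lemma digamma_one_add_sub_digamma_two_le_log {x : ℝ} (hx : 1 ≤ x) :
    digamma (1 + x) - digamma 2 ≤ Real.log x := by
  have h := sub_le_sub_of_hasDerivAt_le (f := fun t => digamma (1 + t)) (g := Real.log)
    (g' := fun t => t⁻¹) hx (fun t ht => hasDerivAt_digamma_one_add (by linarith [ht.1]))
    (fun t ht => Real.hasDerivAt_log (by linarith [ht.1])) fun t ht => ?_
  · norm_num at h
    linarith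
  · have ht0 : 0 < t := by linarith [ht.1]
    calc trigamma (1 + t) ≤ 1 / (t + 1 / 2) := trigamma_one_add_le (by linarith)
      _ ≤ t⁻¹ := by rw [one_div]; exact inv_anti₀ ht0 (by linarith)

lemma mul_log_le_digamma_one_add_sub_digamma_two {x : ℝ} (hx : 1 ≤ x) :
    (π ^ 2 / 6 - 1) * Real.log x ≤ digamma (1 + x) - digamma 2 := by
  have hC0 : 0 < π ^ 2 / 6 - 1 := trigamma_two ▸ trigamma_pos two_pos
  have hC1 : π ^ 2 / 6 - 1 ≤ 1 := by nlinarith [Real.pi_lt_d2, Real.pi_pos]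
  have h := sub_le_sub_of_hasDerivAt_le (f := fun t => (π ^ 2 / 6 - 1) * Real.log t)
    (g := fun t => digamma (1 + t)) (f' := fun t => (π ^ 2 / 6 - 1) * t⁻¹) hx
    (fun t ht => (Real.hasDerivAt_log (by linarith [ht.1])).const_mul _)
    (fun t ht => hasDerivAt_digamma_one_add (by linarith [ht.1])) fun t ht => ?_
  · norm_num at h
    linarith
  · refine le_trans ?_ (one_div_le_trigamma_one_add ht.1)
    generalize π ^ 2 / 6 - 1 = C at hC0 hC1 ⊢
    have ht0 : 0 < t := by linarith [ht.1]
    have hD : 0 < t + 1 / C - 1 := by linarith [ht.1, one_div_pos.2 hC0]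
    have hCD : C * (t + 1 / C - 1) = t - (1 - C) * (t - 1) := by field_simp; ring
    rw [← div_eq_mul_inv, div_le_div_iff₀ ht0 hD, hCD]
    nlinarith [ht.1]

/-- For `x ≥ 1`: `1/(x + 1/(π²/6 − 1) − 1) ≤ ψ'(1+x) ≤ 1/(x + 1/2)`, and consequently
`(π²/6 − 1) log x ≤ ψ(1+x) − ψ(2) ≤ log x`. -/
theorem trigamma_digamma_bounds (x : ℝ) (hx : 1 ≤ x) :
    (1 / (x + 1 / (Real.pi ^ 2 / 6 - 1) - 1) ≤ trigamma (1 + x) ∧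
      trigamma (1 + x) ≤ 1 / (x + 1 / 2)) ∧
    ((Real.pi ^ 2 / 6 - 1) * Real.log x ≤ digamma (1 + x) - digamma 2 ∧
      digamma (1 + x) - digamma 2 ≤ Real.log x) :=
  ⟨⟨one_div_le_trigamma_one_add hx, trigamma_one_add_le (by linarith)⟩,
    mul_log_le_digamma_one_add_sub_digamma_two hx, digamma_one_add_sub_digamma_two_le_log hx⟩
end

section
/- Let P be a probability distribution on a finite vocabulary with P_max = max_w P_w ≤ 1−Δ for small Δ, and let F_{1,P}(r) = Σ_w P_w r^{1/P_w}. Then for the log score h_log(y) = log y, E_{Y∼μ_{1,P}} log Y − E_{Y∼Uniform(0,1)} log Y = 1 − Σ_w P_w², and there exist constants c₁, c₂ > 0 with c₁Δ ≤ 1 − Σ_w P_w² ≤ c₂Δ. -/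
open MeasureTheory Real Set Finset

/-! Under `r = exp (-t)` the density `r ^ (a - 1)` against `log r` on `(0, 1)` becomes the Gamma
integrand `t e^{-a t}` on `(0, ∞)`, so `∫₀¹ r ^ (a - 1) log r = -Γ(2) / a² = -1 / a²`. Summing over
`a = 1 / P w` and subtracting the case `a = 1` gives `1 - ∑ P w²`. Writing `M = max P w`, the
inequalities `M² ≤ ∑ P w² ≤ ∑ P w · M = M` give `1 - M ≤ 1 - ∑ P w² ≤ 1 - M² ≤ 2 (1 - M)`. -/

section ExpNegSubstitution

variable {E : Type*} [NormedAddCommGroup E] [NormedSpace ℝ E]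

lemma image_exp_neg_Ioi_zero : (fun t : ℝ => exp (-t)) '' Ioi 0 = Set.Ioo (0 : ℝ) 1 := by
  ext r
  constructor
  · rintro ⟨t, ht, rfl⟩
    exact ⟨exp_pos _, by rwa [exp_lt_one_iff, neg_neg_iff_pos]⟩
  · rintro ⟨hr0, hr1⟩
    exact ⟨-log r, by simpa using log_neg hr0 hr1, by simp [exp_log hr0]⟩

lemma injOn_exp_neg : InjOn (fun t : ℝ => exp (-t)) (Ioi 0) :=
  fun _ _ _ _ h => neg_injective (exp_injective h)

lemma hasDerivWithinAt_exp_neg (s : Set ℝ) (t : ℝ) :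
    HasDerivWithinAt (fun t : ℝ => exp (-t)) (-exp (-t)) s t := by
  simpa using (hasDerivAt_neg t).exp.hasDerivWithinAt

theorem integral_Ioo_zero_one_eq_integral_comp_exp_neg (g : ℝ → E) :
    ∫ r in Set.Ioo 0 1, g r = ∫ t in Ioi 0, exp (-t) • g (exp (-t)) := by
  rw [← image_exp_neg_Ioi_zero, integral_image_eq_integral_abs_deriv_smul measurableSet_Ioi
    (fun t _ => hasDerivWithinAt_exp_neg _ t) injOn_exp_neg]
  simp only [abs_neg, abs_exp]

theorem integrableOn_Ioo_zero_one_iff_comp_exp_neg (g : ℝ → E) :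
    IntegrableOn g (Set.Ioo 0 1) ↔ IntegrableOn (fun t => exp (-t) • g (exp (-t))) (Ioi 0) := by
  rw [← image_exp_neg_Ioi_zero, integrableOn_image_iff_integrableOn_abs_deriv_smul
    measurableSet_Ioi (fun t _ => hasDerivWithinAt_exp_neg _ t) injOn_exp_neg]
  simp only [abs_neg, abs_exp]

end ExpNegSubstitution

lemma exp_neg_mul_rpow_mul_log_exp_neg (a t : ℝ) :
    exp (-t) * (exp (-t) ^ (a - 1) * log (exp (-t))) = -(t * exp (-(a * t))) := by
  rw [log_exp, ← exp_mul, ← mul_assoc, ← exp_add]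
  ring_nf

lemma integrableOn_rpow_mul_log {a : ℝ} (ha : 0 < a) :
    IntegrableOn (fun r : ℝ => r ^ (a - 1) * log r) (Set.Ioo 0 1) := by
  rw [integrableOn_Ioo_zero_one_iff_comp_exp_neg]
  refine ((integrableOn_rpow_mul_exp_neg_mul_rpow (p := 1) (s := 1) (b := a)
    (by norm_num) one_pos ha).neg).congr_fun (fun t _ => ?_) measurableSet_Ioi
  simp only [rpow_one, neg_mul, Pi.neg_apply, smul_eq_mul, exp_neg_mul_rpow_mul_log_exp_neg]

theorem integral_rpow_mul_log {a : ℝ} (ha : 0 < a) :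
    ∫ r in Set.Ioo 0 1, r ^ (a - 1) * log r = -(a ^ 2)⁻¹ := by
  have hGamma := integral_rpow_mul_exp_neg_mul_Ioi (a := 2) two_pos ha
  norm_num [Gamma_two] at hGamma
  simp only [integral_Ioo_zero_one_eq_integral_comp_exp_neg, smul_eq_mul,
    exp_neg_mul_rpow_mul_log_exp_neg, integral_neg, hGamma]

lemma integral_log_Ioo_zero_one : ∫ r in Set.Ioo 0 1, log r = -1 := by
  simpa using integral_rpow_mul_log one_pos

section ProbabilityVector

variable {ι : Type*} {s : Finset ι} (hs : s.Nonempty) (p : ι → ℝ)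

lemma sq_sup'_le_sum_sq : s.sup' hs p ^ 2 ≤ ∑ i ∈ s, p i ^ 2 := by
  obtain ⟨i, hi, hmax⟩ := exists_mem_eq_sup' hs p
  rw [hmax]
  exact single_le_sum (fun j _ => sq_nonneg (p j)) hi

lemma one_sub_sum_sq_le_two_mul_one_sub_sup'_s12 :
    1 - ∑ i ∈ s, p i ^ 2 ≤ 2 * (1 - s.sup' hs p) := by
  nlinarith [sq_sup'_le_sum_sq hs p, sq_nonneg (1 - s.sup' hs p)]

variable (hp : ∀ i ∈ s, 0 ≤ p i) (hsum : ∑ i ∈ s, p i = 1)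
include hp hsum

lemma sum_sq_le_sup' : ∑ i ∈ s, p i ^ 2 ≤ s.sup' hs p :=
  calc ∑ i ∈ s, p i ^ 2 ≤ ∑ i ∈ s, p i * s.sup' hs p :=
        sum_le_sum fun i hi => by rw [sq]; exact mul_le_mul_of_nonneg_left (le_sup' p hi) (hp i hi)
    _ = s.sup' hs p := by rw [← sum_mul, hsum, one_mul]

lemma one_sub_sup'_le_one_sub_sum_sq : 1 - s.sup' hs p ≤ 1 - ∑ i ∈ s, p i ^ 2 := by
  linarith [sum_sq_le_sup' hs p hp hsum]

end ProbabilityVector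

/-- Expectation gap of the log score `h_log(y) = log y` for the Gumbel-max watermark:
`E_{1,P} log Y − E_0 log Y = 1 − ∑_w P_w²`, and this gap is of order
`Δ = 1 − max_w P_w` (for `Δ` small, with explicit constants). -/
theorem log_score_expectation_gap {W : Type*} [Fintype W] [Nonempty W]
    (P : W → ℝ) (hpos : ∀ w, 0 < P w) (hsum : ∑ w, P w = 1) :
    ((∫ r in Set.Ioo (0:ℝ) 1, (∑ w, r ^ (1 / P w - 1)) * Real.log r) -
        ∫ r in Set.Ioo (0:ℝ) 1, Real.log r)
      = 1 - ∑ w, (P w) ^ 2 ∧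
    ∃ c₁ c₂ : ℝ, 0 < c₁ ∧ 0 < c₂ ∧
      c₁ * (1 - Finset.univ.sup' Finset.univ_nonempty P) ≤ 1 - ∑ w, (P w) ^ 2 ∧
      1 - ∑ w, (P w) ^ 2 ≤ c₂ * (1 - Finset.univ.sup' Finset.univ_nonempty P) := by
  have hexp : ∀ w, 0 < 1 / P w := fun w => one_div_pos.mpr (hpos w)
  refine ⟨?_, 1, 2, one_pos, two_pos, ?_, ?_⟩
  · simp_rw [sum_mul]
    rw [integral_finsetSum _ fun w _ => integrableOn_rpow_mul_log (hexp w),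
      integral_log_Ioo_zero_one, sum_congr rfl fun w _ => integral_rpow_mul_log (hexp w)]
    simp only [one_div, inv_pow, inv_inv, sum_neg_distrib]
    ring
  · rw [one_mul]
    exact one_sub_sup'_le_one_sub_sum_sq _ P (fun w _ => (hpos w).le) hsum
  · exact one_sub_sum_sq_le_two_mul_one_sub_sup'_s12 _ P
end

section
/- Let h : [0,1] → ℝ be non-decreasing with h(1) − h(0) < ∞ and ∫_0^1 y log(1/y) dh(y) > 0. Let P be a probability distribution on a finite vocabulary with singularity Δ = 1 − max_w P_w. Then for sufficiently small Δ, E_{Y∼μ_{1,P}} h(Y) − E_{Y∼Uniform(0,1)} h(Y) = Θ(Δ), i.e., there exist positive constants c₁, c₂ independent of Δ such that c₁Δ ≤ E_{1,P} h − E_0 h ≤ c₂Δ. -/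
open MeasureTheory Real Set

/-!
Substituting `r = s ^ P w` turns the gap into `∑ w, P w * Φ (P w)` with
`Φ q = h.rpowGap q = ∫₀¹ (h (s ^ q) - h s) ds`, and Fubini against `dh` gives
`Φ q = ∫ (y - y ^ q⁻¹) dh(y)`.
Convexity of `t ↦ y ^ t` between `t = 1` and `t = 1 / p` sandwiches `y - y ^ (1 / p)` between
`(1 / p - 1) y ^ (1 / p) log (1 / y)` and `(1 / p - 1) y log (1 / y)`. For the most likely token,
`p = 1 - Δ ≥ 1 / 2`, this gives `Δ ∫ y² log (1 / y) dh ≤ p Φ p ≤ Δ ∫ y log (1 / y) dh`; the other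
tokens carry total mass `Δ` and each has `0 ≤ Φ ≤ h 1 - h 0`.
-/

lemma one_add_mul_log_le_rpow {y : ℝ} (hy : 0 < y) (t : ℝ) : 1 + t * log y ≤ y ^ t := by
  rw [rpow_def_of_pos hy]
  linarith [add_one_le_exp (log y * t)]

lemma self_sub_rpow_le {y : ℝ} (hy : 0 < y) (q : ℝ) :
    y - y ^ q ≤ (q - 1) * (y * log (1 / y)) := by
  have hsplit : y ^ q = y * y ^ (q - 1) := by
    simpa using rpow_add hy 1 (q - 1)
  rw [hsplit, one_div, log_inv]
  nlinarith [one_add_mul_log_le_rpow hy (q - 1)]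

lemma mul_rpow_log_le_self_sub_rpow {y : ℝ} (hy : 0 < y) (q : ℝ) :
    (q - 1) * (y ^ q * log (1 / y)) ≤ y - y ^ q := by
  have hsplit : y = y ^ q * y ^ (1 - q) := by
    rw [← rpow_add hy, add_sub_cancel, rpow_one]
  have hyq : 0 < y ^ q := rpow_pos_of_pos hy q
  rw [one_div, log_inv]
  nth_rewrite 3 [hsplit]
  nlinarith [one_add_mul_log_le_rpow hy (1 - q)]

theorem integral_Ioo_zero_one_comp_rpow {E : Type*} [NormedAddCommGroup E] [NormedSpace ℝ E]
    (g : ℝ → E) {q : ℝ} (hq : 0 < q) :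
    ∫ x in Ioo 0 1, (q * x ^ (q - 1)) • g (x ^ q) = ∫ y in Ioo 0 1, g y := by
  have himage : (fun x : ℝ ↦ x ^ q) '' Ioo 0 1 = Ioo (0 : ℝ) 1 := by
    rw [(continuous_rpow_const hq.le).continuousOn.image_Ioo_of_strictMonoOn (zero_le_one' ℝ)
      ((strictMonoOn_rpow_Ici_of_exponent_pos hq).mono Icc_subset_Ici_self),
      zero_rpow hq.ne', one_rpow]
  conv_rhs => rw [← himage]
  rw [integral_image_eq_integral_abs_deriv_smul measurableSet_Ioo
    (fun x hx ↦ (hasDerivAt_rpow_const (Or.inl hx.1.ne')).hasDerivWithinAt)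
    ((rpow_left_injOn hq.ne').mono fun x hx ↦ hx.1.le)]
  refine setIntegral_congr_fun measurableSet_Ioo fun x hx ↦ ?_
  rw [abs_of_pos (by have := hx.1; positivity)]

lemma integral_mul_rpow_one_div_sub_one (g : ℝ → ℝ) {p : ℝ} (hp : 0 < p) :
    ∫ r in Ioo 0 1, g r * r ^ (1 / p - 1) = p * ∫ s in Ioo 0 1, g (s ^ p) := by
  rw [← integral_Ioo_zero_one_comp_rpow (fun s ↦ g (s ^ p)) (one_div_pos.2 hp),
    ← integral_const_mul]
  refine setIntegral_congr_fun measurableSet_Ioo fun r hr ↦ ?_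
  rw [smul_eq_mul, one_div, rpow_inv_rpow hr.1.le hp.ne']
  field_simp

lemma Continuous.integrableOn_Ioo {E : Type*} [NormedAddCommGroup E] {μ : Measure ℝ}
    [IsLocallyFiniteMeasure μ] {f : ℝ → E} {a b : ℝ} (hf : Continuous f) :
    IntegrableOn f (Ioo a b) μ :=
  hf.integrableOn_Icc.mono_set Ioo_subset_Icc_self

lemma continuous_mul_log_one_div : Continuous fun y : ℝ ↦ y * log (1 / y) := by
  simpa [negMulLog_eq_neg, one_div, log_inv] using continuous_negMulLog

lemma integral_sq_mul_log_pos {μ : Measure ℝ}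
    (hpos : 0 < ∫ y in Ioo 0 1, y * log (1 / y) ∂μ) :
    0 < ∫ y in Ioo 0 1, y ^ 2 * log (1 / y) ∂μ := by
  have hμ : μ (Ioo 0 1) ≠ 0 := fun h0 ↦ by
    simp [Measure.restrict_eq_zero.2 h0] at hpos
  have hlog : ∀ y ∈ Ioo (0 : ℝ) 1, 0 < log (1 / y) := fun y hy ↦
    log_pos (one_lt_one_div hy.1 hy.2)
  have hpos_on : ∀ y ∈ Ioo (0 : ℝ) 1, 0 < y ^ 2 * log (1 / y) := fun y hy ↦
    mul_pos (pow_pos hy.1 2) (hlog y hy)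
  have hint : IntegrableOn (fun y ↦ y ^ 2 * log (1 / y)) (Ioo 0 1) μ := by
    refine (Integrable.of_integral_ne_zero hpos.ne').mono'
      (by fun_prop : Measurable _).aestronglyMeasurable
      (ae_restrict_of_forall_mem measurableSet_Ioo fun y hy ↦ ?_)
    rw [norm_of_nonneg (hpos_on y hy).le, pow_two, mul_assoc]
    exact mul_le_of_le_one_left (mul_pos hy.1 (hlog y hy)).le hy.2.le
  rw [setIntegral_pos_iff_support_of_nonneg_ae
    (ae_restrict_of_forall_mem measurableSet_Ioo fun y hy ↦ (hpos_on y hy).le) hint]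
  have hsupport : Ioo 0 1 ⊆ Function.support (fun y : ℝ ↦ y ^ 2 * log (1 / y)) ∩ Ioo 0 1 :=
    fun y hy ↦ ⟨(hpos_on y hy).ne', hy⟩
  exact (pos_iff_ne_zero.2 hμ).trans_le (measure_mono hsupport)

namespace StieltjesFunction

variable (h : StieltjesFunction ℝ)

noncomputable def rpowGap (q : ℝ) : ℝ := ∫ s in Ioo 0 1, (h (s ^ q) - h s)

lemma integrableOn_Ioo : IntegrableOn h (Ioo 0 1) :=
  (h.mono.monotoneOn _).integrableOn_isCompact isCompact_Icc |>.mono_set Ioo_subset_Icc_self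

lemma integrableOn_comp_rpow_Ioo {q : ℝ} (hq : 0 ≤ q) :
    IntegrableOn (fun s ↦ h (s ^ q)) (Ioo 0 1) := by
  refine MonotoneOn.integrableOn_isCompact isCompact_Icc (fun _ hs _ _ hst ↦ ?_)
    |>.mono_set Ioo_subset_Icc_self
  exact h.mono (rpow_le_rpow hs.1 hst hq)

lemma integrableOn_mul_rpow_Ioo {a : ℝ} (ha : 0 ≤ a) :
    IntegrableOn (fun r ↦ h r * r ^ a) (Ioo 0 1) :=
  ((h.mono.monotoneOn _).integrableOn_isCompact isCompact_Icc).mul_continuousOn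
    (continuous_rpow_const ha).continuousOn isCompact_Icc |>.mono_set Ioo_subset_Icc_self

lemma rpowGap_nonneg {q : ℝ} (hq : q ≤ 1) : 0 ≤ h.rpowGap q :=
  setIntegral_nonneg measurableSet_Ioo fun _ hs ↦
    sub_nonneg.2 (h.mono (self_le_rpow_of_le_one hs.1.le hs.2.le hq))

lemma rpowGap_le {q : ℝ} (hq : 0 ≤ q) : h.rpowGap q ≤ h 1 - h 0 := by
  have hbound : ∀ s ∈ Ioo (0 : ℝ) 1, h (s ^ q) - h s ≤ h 1 - h 0 := fun s hs ↦
    sub_le_sub (h.mono (rpow_le_one hs.1.le hs.2.le hq)) (h.mono hs.1.le)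
  calc h.rpowGap q ≤ ∫ _ in Ioo (0 : ℝ) 1, (h 1 - h 0) :=
        setIntegral_mono_on ((h.integrableOn_comp_rpow_Ioo hq).sub h.integrableOn_Ioo)
          (integrableOn_const measure_Ioo_lt_top.ne) measurableSet_Ioo hbound
    _ = h 1 - h 0 := by simp

lemma setLIntegral_ofReal_sub_comp_rpow {p : ℝ} (hp0 : 0 < p) :
    ∫⁻ s in Ioo 0 1, ENNReal.ofReal (h (s ^ p) - h s)
      = ∫⁻ y in Ioo 0 1, ENNReal.ofReal (y - y ^ p⁻¹) ∂h.measure := by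
  set S : Set (ℝ × ℝ) := {z | z.1 < z.2 ∧ z.2 ≤ z.1 ^ p}
  have hS : MeasurableSet S := (measurableSet_lt measurable_fst measurable_snd).inter
    (measurableSet_le measurable_snd
      ((continuous_rpow_const hp0.le).measurable.comp measurable_fst))
  have hsection_fst : ∀ s ∈ Ioo (0 : ℝ) 1,
      h.measure.restrict (Ioo 0 1) (Prod.mk s ⁻¹' S) = ENNReal.ofReal (h (s ^ p) - h s) := by
    intro s hs
    have hsub : Ioc s (s ^ p) ⊆ Ioo 0 1 := fun y hy ↦
      ⟨hs.1.trans hy.1, hy.2.trans_lt (rpow_lt_one hs.1.le hs.2 hp0)⟩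
    rw [show Prod.mk s ⁻¹' S = Ioc s (s ^ p) from rfl, Measure.restrict_apply measurableSet_Ioc,
      inter_eq_left.2 hsub, h.measure_Ioc]
  have hsection_snd : ∀ y ∈ Ioo (0 : ℝ) 1,
      volume.restrict (Ioo 0 1) ((fun x ↦ (x, y)) ⁻¹' S) = ENNReal.ofReal (y - y ^ p⁻¹) := by
    intro y hy
    have hsection : (fun x ↦ (x, y)) ⁻¹' S ∩ Ioo 0 1 = Ico (y ^ p⁻¹) y := by
      ext x
      simp only [S, mem_inter_iff, mem_preimage, mem_Ioo, mem_Ico]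
      constructor
      · rintro ⟨⟨hxy, hyx⟩, hx0, -⟩
        exact ⟨(rpow_inv_le_iff_of_pos hy.1.le hx0.le hp0).2 hyx, hxy⟩
      · rintro ⟨hyx, hxy⟩
        have hx0 : 0 < x := (rpow_pos_of_pos hy.1 _).trans_le hyx
        exact ⟨⟨hxy, (rpow_inv_le_iff_of_pos hy.1.le hx0.le hp0).1 hyx⟩, hx0, hxy.trans hy.2⟩
    rw [Measure.restrict_apply' measurableSet_Ioo, hsection, volume_Ico]
  calc _ = ∫⁻ s in Ioo 0 1, h.measure.restrict (Ioo 0 1) (Prod.mk s ⁻¹' S) :=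
        (setLIntegral_congr_fun measurableSet_Ioo hsection_fst).symm
    _ = ((volume.restrict (Ioo 0 1)).prod (h.measure.restrict (Ioo 0 1))) S :=
        (Measure.prod_apply hS).symm
    _ = ∫⁻ y in Ioo 0 1, volume.restrict (Ioo 0 1) ((fun x ↦ (x, y)) ⁻¹' S) ∂h.measure :=
        Measure.prod_apply_symm hS
    _ = _ := setLIntegral_congr_fun measurableSet_Ioo hsection_snd

lemma rpowGap_eq_integral_measure {p : ℝ} (hp0 : 0 < p) (hp1 : p ≤ 1) :
    h.rpowGap p = ∫ y in Ioo 0 1, (y - y ^ p⁻¹) ∂h.measure := by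
  rw [rpowGap, integral_eq_lintegral_of_nonneg_ae, integral_eq_lintegral_of_nonneg_ae,
    h.setLIntegral_ofReal_sub_comp_rpow hp0]
  · exact ae_restrict_of_forall_mem measurableSet_Ioo fun y hy ↦
      sub_nonneg.2 (rpow_le_self_of_le_one hy.1.le hy.2.le (one_le_inv₀ hp0 |>.2 hp1))
  · exact (measurable_id.sub
      (continuous_rpow_const (inv_nonneg.2 hp0.le)).measurable).aestronglyMeasurable
  · exact ae_restrict_of_forall_mem measurableSet_Ioo fun s hs ↦
      sub_nonneg.2 (h.mono (self_le_rpow_of_le_one hs.1.le hs.2.le hp1))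
  · exact ((h.integrableOn_comp_rpow_Ioo hp0.le).sub h.integrableOn_Ioo).aestronglyMeasurable

lemma rpowGap_eq_sub {q : ℝ} (hq : 0 ≤ q) :
    h.rpowGap q = (∫ s in Ioo 0 1, h (s ^ q)) - ∫ s in Ioo 0 1, h s :=
  integral_sub (h.integrableOn_comp_rpow_Ioo hq) h.integrableOn_Ioo

lemma integral_mul_sum_rpow_sub_integral {W : Type*} [Fintype W] (P : W → ℝ)
    (hP : ∀ w, 0 < P w) (hsum : ∑ w, P w = 1) :
    (∫ r in Ioo 0 1, h r * ∑ w, r ^ (1 / P w - 1)) - ∫ r in Ioo 0 1, h r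
      = ∑ w, P w * h.rpowGap (P w) := by
  have hexp : ∀ w, 0 ≤ 1 / P w - 1 := fun w ↦ by
    have hle : P w ≤ 1 := hsum ▸ Finset.single_le_sum (fun i _ ↦ (hP i).le) (Finset.mem_univ w)
    linarith [one_le_one_div (hP w) hle]
  simp_rw [Finset.mul_sum]
  rw [integral_finsetSum _ fun w _ ↦ h.integrableOn_mul_rpow_Ioo (hexp w)]
  simp_rw [integral_mul_rpow_one_div_sub_one _ (hP _), h.rpowGap_eq_sub (hP _).le, mul_sub,
    Finset.sum_sub_distrib, ← Finset.sum_mul, hsum, one_mul]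

lemma mul_rpowGap_le {p : ℝ} (hp0 : 0 < p) (hp1 : p ≤ 1) :
    p * h.rpowGap p ≤ (1 - p) * ∫ y in Ioo 0 1, y * log (1 / y) ∂h.measure := by
  rw [h.rpowGap_eq_integral_measure hp0 hp1]
  calc p * ∫ y in Ioo 0 1, (y - y ^ p⁻¹) ∂h.measure
      ≤ p * ∫ y in Ioo 0 1, (p⁻¹ - 1) * (y * log (1 / y)) ∂h.measure := by
        have hcont : Continuous fun y : ℝ ↦ y - y ^ p⁻¹ :=
          continuous_id.sub (continuous_rpow_const (inv_nonneg.2 hp0.le))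
        refine mul_le_mul_of_nonneg_left ?_ hp0.le
        exact setIntegral_mono_on hcont.integrableOn_Ioo
          (continuous_mul_log_one_div.integrableOn_Ioo.const_mul _) measurableSet_Ioo
          fun y hy ↦ self_sub_rpow_le hy.1 _
    _ = _ := by rw [integral_const_mul]; field_simp

lemma mul_integral_le_mul_rpowGap {p : ℝ} (hp0 : 1 / 2 ≤ p) (hp1 : p ≤ 1) :
    (1 - p) * ∫ y in Ioo 0 1, y ^ 2 * log (1 / y) ∂h.measure ≤ p * h.rpowGap p := by
  have hp : 0 < p := by linarith
  have hpointwise : ∀ y ∈ Ioo (0 : ℝ) 1, (p⁻¹ - 1) * (y ^ 2 * log (1 / y)) ≤ y - y ^ p⁻¹ := by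
    intro y hy
    have hlog : 0 ≤ log (1 / y) := (log_pos (one_lt_one_div hy.1 hy.2)).le
    have hsq : y ^ 2 ≤ y ^ p⁻¹ := by
      rw [← rpow_two]
      exact rpow_le_rpow_of_exponent_ge hy.1 hy.2.le (by rw [inv_le_comm₀ hp two_pos]; linarith)
    calc (p⁻¹ - 1) * (y ^ 2 * log (1 / y)) ≤ (p⁻¹ - 1) * (y ^ p⁻¹ * log (1 / y)) := by
          gcongr
          exact sub_nonneg.2 ((one_le_inv₀ hp).2 hp1)
      _ ≤ y - y ^ p⁻¹ := mul_rpow_log_le_self_sub_rpow hy.1 _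
  rw [h.rpowGap_eq_integral_measure hp hp1]
  calc (1 - p) * ∫ y in Ioo 0 1, y ^ 2 * log (1 / y) ∂h.measure
      = p * ∫ y in Ioo 0 1, (p⁻¹ - 1) * (y ^ 2 * log (1 / y)) ∂h.measure := by
        rw [integral_const_mul]; field_simp
    _ ≤ p * ∫ y in Ioo 0 1, (y - y ^ p⁻¹) ∂h.measure := by
        have hcont_sq : Continuous fun y : ℝ ↦ y ^ 2 * log (1 / y) := by
          simpa only [pow_two, mul_assoc] using continuous_id'.fun_mul continuous_mul_log_one_div
        have hcont : Continuous fun y : ℝ ↦ y - y ^ p⁻¹ :=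
          continuous_id.sub (continuous_rpow_const (inv_nonneg.2 hp.le))
        refine mul_le_mul_of_nonneg_left ?_ hp.le
        exact setIntegral_mono_on (hcont_sq.integrableOn_Ioo.const_mul _) hcont.integrableOn_Ioo
          measurableSet_Ioo hpointwise

end StieltjesFunction

/-- **General expectation gap for monotone scores.** Let `h` be a non-decreasing
(Stieltjes) score function with `∫₀¹ y log(1/y) dh(y) > 0`. Then there are positive
constants `c₁, c₂` and a threshold `Δ₀ > 0` such that for every probability
distribution `P` on a finite vocabulary with singularity `Δ = 1 − max_w P_w ≤ Δ₀`,
the expectation gap `E_{1,P} h(Y) − E_0 h(Y)` lies between `c₁ Δ` and `c₂ Δ`. -/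
theorem monotone_score_expectation_gap (h : StieltjesFunction ℝ)
    (hpos : 0 < ∫ y in Set.Ioo (0:ℝ) 1, y * Real.log (1 / y) ∂h.measure) :
    ∃ c₁ c₂ Δ₀ : ℝ, 0 < c₁ ∧ 0 < c₂ ∧ 0 < Δ₀ ∧
      ∀ (W : Type) [Fintype W] [Nonempty W] (P : W → ℝ),
        (∀ w, 0 < P w) → (∑ w, P w = 1) →
        1 - Finset.univ.sup' Finset.univ_nonempty P ≤ Δ₀ →
        c₁ * (1 - Finset.univ.sup' Finset.univ_nonempty P)
            ≤ (∫ r in Set.Ioo (0:ℝ) 1, h r * (∑ w, r ^ (1 / P w - 1))) -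
              (∫ r in Set.Ioo (0:ℝ) 1, h r) ∧
        (∫ r in Set.Ioo (0:ℝ) 1, h r * (∑ w, r ^ (1 / P w - 1))) -
              (∫ r in Set.Ioo (0:ℝ) 1, h r)
            ≤ c₂ * (1 - Finset.univ.sup' Finset.univ_nonempty P) := by
  refine ⟨∫ y in Ioo 0 1, y ^ 2 * log (1 / y) ∂h.measure,
    (∫ y in Ioo 0 1, y * log (1 / y) ∂h.measure) + (h 1 - h 0), 1 / 2,
    integral_sq_mul_log_pos hpos,
    add_pos_of_pos_of_nonneg hpos (sub_nonneg.2 (h.mono zero_le_one)), one_half_pos, ?_⟩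
  intro W _ _ P hP hsum hΔ
  classical
  obtain ⟨w₀, -, hw₀⟩ := Finset.exists_mem_eq_sup' Finset.univ_nonempty P
  rw [hw₀] at hΔ ⊢
  have hle : ∀ w, P w ≤ 1 := fun w ↦
    hsum ▸ Finset.single_le_sum (fun i _ ↦ (hP i).le) (Finset.mem_univ w)
  have hrest_mass : ∑ w ∈ Finset.univ.erase w₀, P w = 1 - P w₀ := by
    rw [← hsum, ← Finset.add_sum_erase _ _ (Finset.mem_univ w₀), add_sub_cancel_left]
  have hrest_nonneg : 0 ≤ ∑ w ∈ Finset.univ.erase w₀, P w * h.rpowGap (P w) :=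
    Finset.sum_nonneg fun w _ ↦ mul_nonneg (hP w).le (h.rpowGap_nonneg (hle w))
  have hrest_le :
      ∑ w ∈ Finset.univ.erase w₀, P w * h.rpowGap (P w) ≤ (1 - P w₀) * (h 1 - h 0) := by
    rw [← hrest_mass, Finset.sum_mul]
    exact Finset.sum_le_sum fun w _ ↦
      mul_le_mul_of_nonneg_left (h.rpowGap_le (hP w).le) (hP w).le
  have hmain_lower := h.mul_integral_le_mul_rpowGap (by linarith) (hle w₀)
  have hmain_upper := h.mul_rpowGap_le (hP w₀) (hle w₀)
  rw [h.integral_mul_sum_rpow_sub_integral P hP hsum,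
    ← Finset.add_sum_erase _ _ (Finset.mem_univ w₀)]
  constructor <;> linarith
end

section
/- Let K_s⁺(u,v) = K_s(u,v) if 0 < v < u < 1 and 0 otherwise, where K_s is the Bernoulli φ_s-divergence. For any s ≤ 2 with s ≠ 1 and any 0 < v ≤ u < 1, K_s⁺(u,v) ≥ K_2⁺(u,v)·[1 − (1−v)(1 − (v/u)^{2−s})]; and for s = 1, K_1⁺(u,v) ≥ K_2⁺(u,v)·(v/u). -/
open Real Set

/-- The Cressie–Read / φ-divergence generator family `φ_s`. -/
noncomputable def phiGen (s x : ℝ) : ℝ :=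
  if s = 1 then x * Real.log x - x + 1
  else if s = 0 then -Real.log x + x - 1
  else (1 - s + s * x - x ^ s) / (s * (1 - s))

/-- The `φ_s`-divergence between `Bernoulli(u)` and `Bernoulli(v)`. -/
noncomputable def Kdiv (s u v : ℝ) : ℝ :=
  v * phiGen s (u / v) + (1 - v) * phiGen s ((1 - u) / (1 - v))

/-- The truncated divergence `K_s⁺(u,v)`, which is `K_s(u,v)` when `0 < v < u < 1`
and `0` otherwise. -/
noncomputable def Kplus (s u v : ℝ) : ℝ :=
  if 0 < v ∧ v < u ∧ u < 1 then Kdiv s u v else 0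

/-! For fixed `v`, the function `t ↦ K_s(t, v)` vanishes together with its derivative at `t = v`,
and its second derivative is `D_s(t, v) = (t/v)^(s-2)/v + ((1-t)/(1-v))^(s-2)/(1-v)`. For `s ≤ 2`
and `v ≤ t ≤ u` the first term is at least `(v/u)^(2-s)/v` and the second at least `1/(1-v)`, so the
second-order Taylor bound `K_s(u, v) ≥ c (u-v)²/2` with `c = (v/u)^(2-s)/v + 1/(1-v)` is exactly the
claimed multiple of `K_2(u, v) = (u-v)²/(2v(1-v))`. The case `s = 1` is this bound weakened by
`v/u ≤ v + (1-v) v/u`. -/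

theorem taylor_lower_bound_of_deriv2_ge {f f' f'' : ℝ → ℝ} {a b c : ℝ} (hab : a ≤ b)
    (hf : ∀ t ∈ Icc a b, HasDerivAt f (f' t) t) (hf' : ∀ t ∈ Icc a b, HasDerivAt f' (f'' t) t)
    (hc : ∀ t ∈ Ico a b, c ≤ f'' t) :
    f a + f' a * (b - a) + c * (b - a) ^ 2 / 2 ≤ f b := by
  have slope : ∀ t ∈ Icc a b, f' a + c * (t - a) ≤ f' t := by
    refine image_le_of_deriv_right_le_deriv_boundary (f := fun t => f' a + c * (t - a))
      (f' := fun _ => c) (by fun_prop) (fun t _ => ?_) (by simp)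
      (fun t ht => (hf' t ht).continuousAt.continuousWithinAt)
      (fun t ht => (hf' t (Ico_subset_Icc_self ht)).hasDerivWithinAt) hc
    exact ((((hasDerivAt_id' t).sub_const a).const_mul c).const_add (f' a)).congr_deriv
      (by ring) |>.hasDerivWithinAt
  refine image_le_of_deriv_right_le_deriv_boundary
    (f := fun t => f a + f' a * (t - a) + c * (t - a) ^ 2 / 2)
    (f' := fun t => f' a + c * (t - a)) (by fun_prop) (fun t _ => ?_) (by simp)
    (fun t ht => (hf t ht).continuousAt.continuousWithinAt)
    (fun t ht => (hf t (Ico_subset_Icc_self ht)).hasDerivWithinAt)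
    (fun t ht => slope t (Ico_subset_Icc_self ht)) (right_mem_Icc.2 hab)
  have h := (((hasDerivAt_id' t).sub_const a).const_mul (f' a)).const_add (f a) |>.fun_add
    ((((hasDerivAt_id' t).sub_const a).fun_pow 2).const_mul c |>.div_const 2)
  exact (h.congr_deriv (by ring)).hasDerivWithinAt

noncomputable def phiDeriv (s x : ℝ) : ℝ :=
  if s = 1 then log x else (1 - x ^ (s - 1)) / (1 - s)

lemma phiGen_one (s : ℝ) : phiGen s 1 = 0 := by
  unfold phiGen
  split_ifs <;> simp

lemma hasDerivAt_phiGen (s : ℝ) {x : ℝ} (hx : 0 < x) :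
    HasDerivAt (phiGen s) (phiDeriv s x) x := by
  rcases eq_or_ne s 1 with rfl | hs1
  · have hφ : phiGen 1 = fun y => y * log y - y + 1 := by ext; simp [phiGen]
    rw [hφ, phiDeriv, if_pos rfl]
    exact (((hasDerivAt_mul_log hx.ne').sub (hasDerivAt_id' x)).add_const 1).congr_deriv
      (by ring)
  rcases eq_or_ne s 0 with rfl | hs0
  · have hφ : phiGen 0 = fun y => -log y + y - 1 := by ext; simp [phiGen]
    rw [hφ, phiDeriv, if_neg zero_ne_one, zero_sub, rpow_neg_one]
    exact (((hasDerivAt_log hx.ne').neg.add (hasDerivAt_id' x)).sub_const 1).congr_deriv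
      (by ring)
  · have hφ : phiGen s = fun y => (1 - s + s * y - y ^ s) / (s * (1 - s)) := by
      ext; simp [phiGen, hs1, hs0]
    have h1s : 1 - s ≠ 0 := sub_ne_zero.2 hs1.symm
    rw [hφ, phiDeriv, if_neg hs1]
    refine ((((hasDerivAt_id' x).const_mul s).const_add (1 - s)).sub
      (hasDerivAt_rpow_const (Or.inl hx.ne'))).div_const _ |>.congr_deriv ?_
    field_simp

lemma hasDerivAt_phiDeriv (s : ℝ) {x : ℝ} (hx : 0 < x) :
    HasDerivAt (phiDeriv s) (x ^ (s - 2)) x := by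
  rcases eq_or_ne s 1 with rfl | hs1
  · have hφ : phiDeriv 1 = log := by ext; simp [phiDeriv]
    rw [hφ, show (1 : ℝ) - 2 = -1 by norm_num, rpow_neg_one]
    exact hasDerivAt_log hx.ne'
  · have hφ : phiDeriv s = fun y => (1 - y ^ (s - 1)) / (1 - s) := by
      ext; simp [phiDeriv, hs1]
    have h1s : 1 - s ≠ 0 := sub_ne_zero.2 hs1.symm
    rw [hφ]
    refine ((hasDerivAt_rpow_const (p := s - 1) (Or.inl hx.ne')).const_sub 1).div_const _
      |>.congr_deriv ?_
    rw [show s - 1 - 1 = s - 2 by ring]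
    field_simp
    ring

noncomputable def kdivDeriv (s t v : ℝ) : ℝ :=
  phiDeriv s (t / v) - phiDeriv s ((1 - t) / (1 - v))

/-- `D_s(t, v)` in the paper's notation. -/
noncomputable def kdivDeriv2 (s t v : ℝ) : ℝ :=
  (t / v) ^ (s - 2) / v + ((1 - t) / (1 - v)) ^ (s - 2) / (1 - v)

lemma hasDerivAt_Kdiv_left (s : ℝ) {t v : ℝ} (hv : 0 < v) (hv1 : v < 1) (ht : 0 < t)
    (ht1 : t < 1) : HasDerivAt (Kdiv s · v) (kdivDeriv s t v) t := by
  have h1v : 1 - v ≠ 0 := by linarith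
  have hA := (hasDerivAt_phiGen s (div_pos ht hv)).comp t ((hasDerivAt_id' t).div_const v)
  have hB := (hasDerivAt_phiGen s (div_pos (sub_pos.2 ht1) (sub_pos.2 hv1))).comp t
    (((hasDerivAt_id' t).const_sub 1).div_const (1 - v))
  refine ((hA.const_mul v).add (hB.const_mul (1 - v))).congr_deriv ?_
  simp only [kdivDeriv]
  field_simp
  ring

lemma hasDerivAt_kdivDeriv (s : ℝ) {t v : ℝ} (hv : 0 < v) (hv1 : v < 1) (ht : 0 < t)
    (ht1 : t < 1) : HasDerivAt (kdivDeriv s · v) (kdivDeriv2 s t v) t := by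
  have h1v : 1 - v ≠ 0 := by linarith
  have hA := (hasDerivAt_phiDeriv s (div_pos ht hv)).comp t ((hasDerivAt_id' t).div_const v)
  have hB := (hasDerivAt_phiDeriv s (div_pos (sub_pos.2 ht1) (sub_pos.2 hv1))).comp t
    (((hasDerivAt_id' t).const_sub 1).div_const (1 - v))
  refine (hA.sub hB).congr_deriv ?_
  simp only [kdivDeriv2]
  field_simp
  ring

lemma Kdiv_self (s : ℝ) {v : ℝ} (hv : v ≠ 0) (hv1 : v ≠ 1) : Kdiv s v v = 0 := by
  simp [Kdiv, div_self hv, div_self (sub_ne_zero.2 hv1.symm), phiGen_one]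

lemma mul_sq_div_two_le_Kdiv {s u v c : ℝ} (hv : 0 < v) (hvu : v ≤ u) (hu : u < 1)
    (hc : ∀ t ∈ Ico v u, c ≤ kdivDeriv2 s t v) :
    c * (u - v) ^ 2 / 2 ≤ Kdiv s u v := by
  have hv1 : v < 1 := hvu.trans_lt hu
  have key := taylor_lower_bound_of_deriv2_ge hvu
    (fun t ht => hasDerivAt_Kdiv_left s hv hv1 (hv.trans_le ht.1) (ht.2.trans_lt hu))
    (fun t ht => hasDerivAt_kdivDeriv s hv hv1 (hv.trans_le ht.1) (ht.2.trans_lt hu)) hc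
  have h1v : 1 - v ≠ 0 := by linarith
  simpa [Kdiv_self s hv.ne' hv1.ne, kdivDeriv, div_self hv.ne', div_self h1v] using key

lemma Kdiv_two {u v : ℝ} (hv : 0 < v) (hv1 : v < 1) :
    Kdiv 2 u v = (u - v) ^ 2 / (2 * (v * (1 - v))) := by
  have h1v : 1 - v ≠ 0 := by linarith
  simp only [Kdiv, phiGen, if_neg (show (2 : ℝ) ≠ 1 by norm_num),
    if_neg (show (2 : ℝ) ≠ 0 by norm_num), rpow_two]
  field_simp
  ring

lemma le_kdivDeriv2 {s t u v : ℝ} (hs : s ≤ 2) (hv : 0 < v) (hvt : v ≤ t) (htu : t ≤ u)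
    (hu : u < 1) : (v / u) ^ (2 - s) / v + 1 / (1 - v) ≤ kdivDeriv2 s t v := by
  have ht : 0 < t := hv.trans_le hvt
  have h1v : 0 < 1 - v := by linarith
  have hflip : (t / v) ^ (s - 2) = (v / t) ^ (2 - s) := by
    rw [show s - 2 = -(2 - s) by ring, rpow_neg (by positivity), ← inv_rpow (by positivity),
      inv_div]
  rw [kdivDeriv2, hflip]
  gcongr
  · exact (div_pos hv (ht.trans_le htu)).le
  · exact one_le_rpow_of_pos_of_le_one_of_nonpos (by apply div_pos <;> linarith)
      ((div_le_one h1v).2 (by linarith)) (by linarith)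

lemma Kdiv_two_mul_le_Kdiv {s u v : ℝ} (hs : s ≤ 2) (hv : 0 < v) (hvu : v ≤ u) (hu : u < 1) :
    Kdiv 2 u v * (1 - (1 - v) * (1 - (v / u) ^ (2 - s))) ≤ Kdiv s u v := by
  have h1v : 1 - v ≠ 0 := by linarith
  calc Kdiv 2 u v * (1 - (1 - v) * (1 - (v / u) ^ (2 - s)))
      = ((v / u) ^ (2 - s) / v + 1 / (1 - v)) * (u - v) ^ 2 / 2 := by
        rw [Kdiv_two hv (by linarith)]
        field_simp
        ring
    _ ≤ Kdiv s u v :=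
        mul_sq_div_two_le_Kdiv hv hvu hu fun t ht => le_kdivDeriv2 hs hv ht.1 ht.2.le hu

/-- Comparison of `K_s⁺` with `K_2⁺`: for `s ≤ 2`, `s ≠ 1` and `0 < v ≤ u < 1`,
`K_s⁺(u,v) ≥ K_2⁺(u,v)·[1 − (1−v)(1 − (v/u)^{2−s})]`, and for `s = 1`,
`K_1⁺(u,v) ≥ K_2⁺(u,v)·(v/u)`. -/
theorem Kplus_lower_bounds (u v : ℝ) (hv : 0 < v) (hvu : v ≤ u) (hu : u < 1) :
    (∀ s : ℝ, s ≤ 2 → s ≠ 1 →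
      Kplus 2 u v * (1 - (1 - v) * (1 - (v / u) ^ ((2:ℝ) - s))) ≤ Kplus s u v) ∧
    Kplus 2 u v * (v / u) ≤ Kplus 1 u v := by
  rcases hvu.eq_or_lt with rfl | hlt
  · simp [Kplus]
  have hKplus (s : ℝ) : Kplus s u v = Kdiv s u v := if_pos ⟨hv, hlt, hu⟩
  simp only [hKplus]
  refine ⟨fun s hs _ => Kdiv_two_mul_le_Kdiv hs hv hvu hu, ?_⟩
  have hvu_div : v / u ≤ 1 := (div_le_one (hv.trans hlt)).2 hvu
  calc Kdiv 2 u v * (v / u)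
      ≤ Kdiv 2 u v * (1 - (1 - v) * (1 - (v / u) ^ ((2 : ℝ) - 1))) := by
        rw [Kdiv_two hv (hlt.trans hu), show (2 : ℝ) - 1 = 1 by norm_num, rpow_one]
        have h1v : 0 < 1 - v := by linarith
        gcongr
        nlinarith
    _ ≤ Kdiv 1 u v := Kdiv_two_mul_le_Kdiv (by norm_num) hv hvu hu
end

section
/- Fix Δ ∈ (0,1) and let x = 1−Δ. Let P be any probability distribution on a finite vocabulary with max_w P_w ≤ 1−Δ, and F_{1,P}(r) = Σ_w P_w r^{1/P_w}. Then x^{Δ/(1−Δ)} + x^{(1−Δ)/Δ} ≤ (1 − F_{1,P}(x))/(1 − x) ≤ |supp(P)|, where supp(P) = {w : P_w ≠ 0}; moreover as Δ → 0 the lower bound tends to 1 + e^{−1}. -/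
open Real Set Finset Filter Topology

/-!
Write `x = 1 - Δ` and `ψ p = p * x ^ (1 / p)`, so that `F_{1,P}(x) = ∑ ψ (P w)` and the ratio equals
`∑ (P w - ψ (P w)) / Δ`. Bernoulli's inequality gives `p - ψ p ≤ 1 - x` on `(0, 1]`, hence the
upper bound. For the lower bound, `ψ` is convex on `[0, ∞)` (on `(0, ∞)` it is the perspective of
`y ↦ x ^ y`) and vanishes at `0`, and masses bounded by `1 - Δ` are majorized by `(1 - Δ, Δ)`; so
`F_{1,P}(x) ≤ ψ (1 - Δ) + ψ Δ`, and the mean value bound `p - ψ p ≥ (1 - x) x ^ (1 / p - 1)` at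
`p = 1 - Δ` and `p = Δ` finishes.
-/

section Majorization

variable {𝕜 : Type*} [Field 𝕜] [LinearOrder 𝕜] [IsStrictOrderedRing 𝕜] {s : Set 𝕜} {f : 𝕜 → 𝕜}

theorem ConvexOn.mul_map_le_of_mem_Icc (hf : ConvexOn 𝕜 s f) {c d y : 𝕜} (hc : c ∈ s)
    (hd : d ∈ s) (hy : y ∈ Icc c d) : (d - c) * f y ≤ (d - y) * f c + (y - c) * f d := by
  rcases hy.1.eq_or_lt with rfl | hcy
  · exact le_of_eq (by ring)
  rcases hy.2.eq_or_lt with rfl | hyd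
  · exact le_of_eq (by ring)
  exact hf.secant_mono_aux1 hc hd hcy hyd

theorem ConvexOn.map_add_map_le (hf : ConvexOn 𝕜 s f) {a b c d : 𝕜} (hc : c ∈ s) (hd : d ∈ s)
    (ha : a ∈ Icc c d) (hb : b ∈ Icc c d) (hab : a + b = c + d) : f a + f b ≤ f c + f d := by
  rcases (ha.1.trans ha.2).eq_or_lt with rfl | hcd
  · rw [le_antisymm ha.2 ha.1, le_antisymm hb.2 hb.1]
  refine le_of_mul_le_mul_left ?_ (sub_pos.2 hcd)
  linear_combination hf.mul_map_le_of_mem_Icc hc hd ha + hf.mul_map_le_of_mem_Icc hc hd hb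
    + (f d - f c) * hab

theorem ConvexOn.map_add_map_le_map_add (hf : ConvexOn 𝕜 (Ici 0) f) (hf0 : f 0 = 0) {a b : 𝕜} (ha : 0 ≤ a)
    (hb : 0 ≤ b) : f a + f b ≤ f (a + b) := by
  simpa [hf0] using hf.map_add_map_le (c := 0) (d := a + b) self_mem_Ici (mem_Ici.2 (by positivity))
    ⟨ha, le_add_of_nonneg_right hb⟩ ⟨hb, le_add_of_nonneg_left ha⟩ (zero_add _).symm

/-- Masses in `[0, t]` with total `σ` are majorized by `(min σ t, σ - min σ t)`. -/
theorem ConvexOn.sum_map_le_map_min_add {ι : Type*} (hf : ConvexOn 𝕜 (Ici 0) f) (hf0 : f 0 = 0)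
    {t : 𝕜} (ht : 0 ≤ t) (u : Finset ι) {p : ι → 𝕜} (hp : ∀ i ∈ u, p i ∈ Icc 0 t) :
    ∑ i ∈ u, f (p i) ≤
      f (min (∑ i ∈ u, p i) t) + f (∑ i ∈ u, p i - min (∑ i ∈ u, p i) t) := by
  classical
  induction u using Finset.induction_on with
  | empty => simp [min_eq_left ht, hf0]
  | insert j u hj ih =>
    rw [sum_insert hj, sum_insert hj]
    have hpj := hp j (mem_insert_self j u)
    have ih := ih fun i hi => hp i (mem_insert_of_mem hi)
    set σ := ∑ i ∈ u, p i
    have hσ : 0 ≤ σ := sum_nonneg fun i hi => (hp i (mem_insert_of_mem hi)).1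
    rcases le_total t σ with htσ | hσt
    · rw [min_eq_right htσ] at ih
      rw [min_eq_right (by linarith [hpj.1])]
      have := hf.map_add_map_le_map_add hf0 hpj.1 (sub_nonneg.2 htσ)
      rw [← add_sub_assoc] at this
      linarith
    · rw [min_eq_left hσt, sub_self, hf0, add_zero] at ih
      set m := min (p j + σ) t
      have hm : m ≤ p j + σ := min_le_left _ _
      have := hf.map_add_map_le (a := p j) (b := σ) (c := p j + σ - m) (d := m)
        (mem_Ici.2 (sub_nonneg.2 hm)) (mem_Ici.2 (le_min (by linarith [hpj.1]) (hpj.1.trans hpj.2)))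
        ⟨by linarith [le_min (le_add_of_nonneg_left hpj.1) hσt],
          le_min (le_add_of_nonneg_right hσ) hpj.2⟩
        ⟨by linarith [le_min (le_add_of_nonneg_right hσ) hpj.2],
          le_min (le_add_of_nonneg_left hpj.1) hσt⟩ (by ring)
      linarith

end Majorization

theorem ConvexOn.perspective {g : ℝ → ℝ} (hg : ConvexOn ℝ univ g) (c : ℝ) :
    ConvexOn ℝ (Ioi 0) fun p => p * g (c / p) := by
  refine ⟨convex_Ioi 0, fun a (ha : 0 < a) b (hb : 0 < b) l m hl hm hlm => ?_⟩
  have hp : 0 < l * a + m * b := (convex_Ioi (0 : ℝ)) ha hb hl hm hlm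
  simp only [smul_eq_mul]
  set p := l * a + m * b
  have key := hg.2 (mem_univ (c / a)) (mem_univ (c / b)) (by positivity : 0 ≤ l * a / p)
    (by positivity : 0 ≤ m * b / p) (by rw [← add_div, div_self hp.ne'])
  have harg : l * a / p * (c / a) + m * b / p * (c / b) = c / p := by
    field_simp
    linear_combination c * hlm
  simp only [smul_eq_mul, harg] at key
  calc p * g (c / p) ≤ p * (l * a / p * g (c / a) + m * b / p * g (c / b)) :=
        mul_le_mul_of_nonneg_left key hp.le
    _ = l * (a * g (c / a)) + m * (b * g (c / b)) := by field_simp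

section SurvivalFunction

variable {x : ℝ}

theorem convexOn_mul_rpow_one_div (hx0 : 0 < x) (hx1 : x ≤ 1) :
    ConvexOn ℝ (Ici 0) fun p : ℝ => p * x ^ (1 / p) := by
  have hIoi : ConvexOn ℝ (Ioi 0) fun p : ℝ => p * x ^ (1 / p) :=
    (convexOn_rpow_left hx0).perspective 1
  have hshrink : ∀ {b t : ℝ}, 0 < b → 0 < t → t ≤ 1 →
      t * b * x ^ (1 / (t * b)) ≤ t * (b * x ^ (1 / b)) := fun hb ht ht1 => by
    rw [mul_assoc]
    refine mul_le_mul_of_nonneg_left (mul_le_mul_of_nonneg_left ?_ hb.le) ht.le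
    exact rpow_le_rpow_of_exponent_ge hx0 hx1
      (one_div_le_one_div_of_le (by positivity) (mul_le_of_le_one_left hb.le ht1))
  rw [convexOn_iff_forall_pos]
  refine ⟨convex_Ici 0, fun a (ha : 0 ≤ a) b (hb : 0 ≤ b) l m hl hm hlm => ?_⟩
  simp only [smul_eq_mul]
  rcases ha.eq_or_lt with rfl | ha
  · rcases hb.eq_or_lt with rfl | hb
    · simp
    · simpa using hshrink hb hm (by linarith)
  rcases hb.eq_or_lt with rfl | hb
  · simpa using hshrink ha hl (by linarith)
  exact hIoi.2 ha hb hl.le hm.le hlm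

theorem sub_mul_rpow_one_div_le (hx : 0 ≤ x) {p : ℝ} (hp : 0 < p) (hp1 : p ≤ 1) :
    p - p * x ^ (1 / p) ≤ 1 - x := by
  have hbern := one_add_mul_self_le_rpow_one_add (by linarith : -1 ≤ x - 1) (one_le_one_div hp hp1)
  rw [add_sub_cancel] at hbern
  have := mul_le_mul_of_nonneg_left hbern hp.le
  have e : p * (1 + 1 / p * (x - 1)) = p + x - 1 := by field_simp; ring
  linarith

theorem mul_rpow_one_div_sub_one_le (hx : 0 < x) {p : ℝ} (hp : 0 < p) (hp1 : p ≤ 1) :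
    (1 - x) * x ^ (1 / p - 1) ≤ p - p * x ^ (1 / p) := by
  set n := 1 / p
  have hbern := one_add_mul_self_le_rpow_one_add (s := x⁻¹ - 1)
    (by linarith [inv_pos.2 hx]) (one_le_one_div hp hp1)
  rw [add_sub_cancel, inv_rpow hx.le] at hbern
  have hxn : 0 < x ^ n := rpow_pos_of_pos hx n
  have := mul_le_mul_of_nonneg_left hbern (mul_pos hp hxn).le
  have e1 : p * x ^ n * (x ^ n)⁻¹ = p := by field_simp
  have e2 : p * x ^ n * (1 + n * (x⁻¹ - 1)) = p * x ^ n + x ^ n * x⁻¹ - x ^ n := by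
    simp only [n]; field_simp; ring
  have e3 : (1 - x) * x ^ (n - 1) = x ^ n * x⁻¹ - x ^ n := by
    rw [rpow_sub_one hx.ne']; field_simp
  linarith

theorem sum_mul_rpow_one_div_le {W : Type*} [Fintype W] (hx0 : 0 < x) (hx1 : x ≤ 1) {t : ℝ}
    (ht : t ≤ 1) {P : W → ℝ} (hP : ∀ w, P w ∈ Icc 0 t) (hsum : ∑ w, P w = 1) :
    ∑ w, P w * x ^ (1 / P w) ≤ t * x ^ (1 / t) + (1 - t) * x ^ (1 / (1 - t)) := by
  obtain ⟨w, -, -⟩ := exists_ne_zero_of_sum_ne_zero (hsum ▸ one_ne_zero)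
  have := (convexOn_mul_rpow_one_div hx0 hx1).sum_map_le_map_min_add (by simp)
    ((hP w).1.trans (hP w).2) univ fun w _ => hP w
  rwa [hsum, min_eq_right ht] at this

theorem one_sub_sum_mul_rpow_le_card_mul {W : Type*} [Fintype W] {P : W → ℝ}
    [DecidablePred fun w => P w ≠ 0] (hx : 0 ≤ x) (hP : ∀ w, 0 ≤ P w) (hsum : ∑ w, P w = 1) :
    1 - ∑ w, P w * x ^ (1 / P w) ≤ #{w | P w ≠ 0} * (1 - x) := by
  calc 1 - ∑ w, P w * x ^ (1 / P w) = ∑ w with P w ≠ 0, (P w - P w * x ^ (1 / P w)) := by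
        rw [← hsum, ← sum_sub_distrib, sum_filter_of_ne]
        intro w _ h hw0
        simp [hw0] at h
    _ ≤ ∑ w with P w ≠ 0, (1 - x) := sum_le_sum fun w hw =>
        sub_mul_rpow_one_div_le hx ((hP w).lt_of_ne' (mem_filter.1 hw).2)
          (hsum ▸ single_le_sum (fun i _ => hP i) (mem_univ w))
    _ = #{w | P w ≠ 0} * (1 - x) := by rw [sum_const, nsmul_eq_mul]

end SurvivalFunction

theorem tendsto_one_sub_rpow_add_one_sub_rpow :
    Tendsto (fun d : ℝ => (1 - d) ^ (d / (1 - d)) + (1 - d) ^ ((1 - d) / d)) (𝓝[>] 0)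
      (𝓝 (1 + exp (-1))) := by
  have hbase : Tendsto (fun d : ℝ => 1 - d) (𝓝[>] 0) (𝓝 1) :=
    ((continuous_sub_left 1).tendsto' 0 1 (sub_zero 1)).mono_left nhdsWithin_le_nhds
  have h1 : Tendsto (fun d : ℝ => (1 - d) ^ (d / (1 - d))) (𝓝[>] 0) (𝓝 1) := by
    have hexp : Tendsto (fun d : ℝ => d / (1 - d)) (𝓝[>] 0) (𝓝 0) := by
      have := (tendsto_id.mono_left nhdsWithin_le_nhds).div hbase one_ne_zero
      rwa [zero_div] at this
    simpa using hbase.rpow hexp (Or.inl one_ne_zero)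
  have h2 : Tendsto (fun d : ℝ => (1 - d) ^ ((1 - d) / d)) (𝓝[>] 0) (𝓝 (exp (-1))) := by
    -- `(1 - d) ^ ((1 - d) / d) = (1 + (-1) / d⁻¹) ^ d⁻¹ / (1 - d)`
    have := ((tendsto_one_add_div_rpow_exp (-1)).comp tendsto_inv_nhdsGT_zero).div hbase
      one_ne_zero
    rw [div_one] at this
    refine this.congr' ?_
    filter_upwards [Ioo_mem_nhdsGT (show (0 : ℝ) < 1 by norm_num)] with d hd
    have hd1 : 0 < 1 - d := by linarith [hd.2]
    rw [sub_div, one_div, div_self hd.1.ne', rpow_sub_one hd1.ne']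
    simp [sub_eq_add_neg]
  simpa using h1.add h2

open Classical in
/-- Bounds on `(1 − F_{1,P}(x))/(1 − x)` at `x = 1 − Δ` for `Δ`-regular `P`:
`x^{Δ/(1−Δ)} + x^{(1−Δ)/Δ} ≤ (1 − F_{1,P}(x))/(1 − x) ≤ |supp(P)|`, and as `Δ → 0⁺`
the lower bound `(1−Δ)^{Δ/(1−Δ)} + (1−Δ)^{(1−Δ)/Δ}` tends to `1 + e⁻¹`. -/
theorem survival_ratio_bounds {W : Type*} [Fintype W]
    (Δ : ℝ) (hΔ : Δ ∈ Set.Ioo (0:ℝ) 1)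
    (P : W → ℝ) (hpos : ∀ w, 0 ≤ P w) (hsum : ∑ w, P w = 1)
    (hreg : ∀ w, P w ≤ 1 - Δ) :
    ((1 - Δ) ^ (Δ / (1 - Δ)) + (1 - Δ) ^ ((1 - Δ) / Δ)
        ≤ (1 - ∑ w, P w * (1 - Δ) ^ (1 / P w)) / (1 - (1 - Δ)) ∧
      (1 - ∑ w, P w * (1 - Δ) ^ (1 / P w)) / (1 - (1 - Δ))
        ≤ ((Finset.univ.filter (fun w => P w ≠ 0)).card : ℝ)) ∧
    Tendsto (fun d : ℝ => (1 - d) ^ (d / (1 - d)) + (1 - d) ^ ((1 - d) / d))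
      (𝓝[>] 0) (𝓝 (1 + Real.exp (-1))) := by
  obtain ⟨hΔ0, hΔ1⟩ := hΔ
  have hx : 0 < 1 - Δ := sub_pos.2 hΔ1
  rw [sub_sub_cancel]
  refine ⟨⟨?_, ?_⟩, tendsto_one_sub_rpow_add_one_sub_rpow⟩
  · have hF := sum_mul_rpow_one_div_le hx (by linarith) (by linarith) (fun w => ⟨hpos w, hreg w⟩)
      hsum
    have h1 := mul_rpow_one_div_sub_one_le hx hx (by linarith)
    have h2 := mul_rpow_one_div_sub_one_le hx hΔ0 hΔ1.le
    rw [sub_sub_cancel] at hF h1 h2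
    rw [show 1 / (1 - Δ) - 1 = Δ / (1 - Δ) by field_simp; ring] at h1
    rw [show 1 / Δ - 1 = (1 - Δ) / Δ by field_simp] at h2
    rw [le_div_iff₀ hΔ0]
    linarith
  · have := one_sub_sum_mul_rpow_le_card_mul hx.le hpos hsum
    rw [sub_sub_cancel] at this
    rwa [div_le_iff₀ hΔ0]
end

section
/- Let μ₀ = Uniform(0,1) with density 1 and let μ₁ have density f on [0,1] with |f(y) − 1| ≤ B for all y and ∫_0^1 f = 1. For ε ∈ (0, 1/B], the squared Hellinger distance satisfies (ε²/18)·E₀[(f(Y)−1)²] ≤ H²(μ₀, (1−ε)μ₀ + εμ₁) ≤ (ε²/2)·E₀[(f(Y)−1)²], where H²(μ₀,ν) = 1 − ∫√(dν/dμ₀) dμ₀ and E₀ is expectation under μ₀. -/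
open MeasureTheory Real Set

lemma sqrt_ub (x : ℝ) (h1 : -1 ≤ x) (h2 : x ≤ 3) :
    Real.sqrt (1 + x) ≤ 1 + x/2 - x^2/18 := by
  have hR : 0 ≤ 1 + x/2 - x^2/18 := by nlinarith [sq_nonneg (x+1), sq_nonneg (x-3)]
  have hprod : 0 ≤ x^2 * (3 - x) * (15 - x) :=
    mul_nonneg (mul_nonneg (sq_nonneg x) (by linarith)) (by linarith)
  have h : Real.sqrt (1 + x) ≤ Real.sqrt ((1 + x/2 - x^2/18)^2) :=
    Real.sqrt_le_sqrt (by nlinarith)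
  rwa [Real.sqrt_sq hR] at h

lemma sqrt_lb (x : ℝ) (h1 : -1 ≤ x) (h2 : x ≤ 3) :
    1 + x/2 - x^2/2 ≤ Real.sqrt (1 + x) := by
  rcases le_or_gt (1 + x/2 - x^2/2) 0 with h | h
  · exact h.trans (Real.sqrt_nonneg _)
  · have hprod : 0 ≤ x^2 * (x + 1) * (3 - x) :=
      mul_nonneg (mul_nonneg (sq_nonneg x) (by linarith)) (by linarith)
    rw [show (1:ℝ) + x = ((1 + x/2 - x^2/2))^2 + (1 + x - (1 + x/2 - x^2/2)^2) by ring]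
    calc 1 + x/2 - x^2/2 = Real.sqrt ((1 + x/2 - x^2/2)^2) := (Real.sqrt_sq h.le).symm
    _ ≤ _ := Real.sqrt_le_sqrt (by nlinarith)

/-- **Hellinger distance of a mixture from the uniform.** Let `μ₀ = Uniform(0,1)` and
let `μ₁` have density `f` on `[0,1]` with `|f − 1| ≤ B` and `∫₀¹ f = 1`. For
`0 < ε ≤ 1/B`, the squared Hellinger distance
`H²(μ₀, (1−ε)μ₀ + εμ₁) = 1 − ∫₀¹ √((1−ε) + ε f(y)) dy` satisfies
`(ε²/18)·E₀[(f−1)²] ≤ H² ≤ (ε²/2)·E₀[(f−1)²]`. -/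
theorem hellinger_mixture_bounds (f : ℝ → ℝ) (B ε : ℝ)
    (hB : 0 < B) (hbound : ∀ y ∈ Set.Icc (0:ℝ) 1, |f y - 1| ≤ B)
    (hint : ∫ y in Set.Ioo (0:ℝ) 1, f y = 1)
    (hε : 0 < ε) (hεB : ε ≤ 1 / B) :
    ε ^ 2 / 18 * ∫ y in Set.Ioo (0:ℝ) 1, (f y - 1) ^ 2
        ≤ 1 - ∫ y in Set.Ioo (0:ℝ) 1, Real.sqrt ((1 - ε) + ε * f y) ∧
    1 - ∫ y in Set.Ioo (0:ℝ) 1, Real.sqrt ((1 - ε) + ε * f y)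
        ≤ ε ^ 2 / 2 * ∫ y in Set.Ioo (0:ℝ) 1, (f y - 1) ^ 2 := by
  set s : Set ℝ := Set.Ioo (0:ℝ) 1 with hsdef
  have hms : MeasurableSet s := measurableSet_Ioo
  have hεB1 : ε * B ≤ 1 := by
    rw [le_div_iff₀ hB] at hεB; linarith
  -- f is integrable on s
  have hf_int : IntegrableOn f s := by
    by_contra h
    rw [MeasureTheory.integral_undef h] at hint; norm_num at hint
  have hmeas := hf_int.aestronglyMeasurable
  -- pointwise bound on g y = ε (f y - 1)
  have hbd : ∀ y ∈ s, |ε * (f y - 1)| ≤ 1 := by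
    intro y hy
    have h0 := hbound y (Set.Ioo_subset_Icc_self hy)
    rw [abs_mul, abs_of_pos hε]
    calc ε * |f y - 1| ≤ ε * B := by nlinarith [abs_nonneg (f y - 1)]
    _ ≤ 1 := hεB1
  -- integrability of (f - 1)^2
  have hsq : IntegrableOn (fun y => (f y - 1)^2) s := by
    apply Integrable.mono' (integrable_const (B^2))
    · have hm1 : AEStronglyMeasurable (fun y => f y - 1) (volume.restrict s) :=
        hmeas.sub aestronglyMeasurable_const
      exact (hm1.mul hm1).congr
        (Filter.Eventually.of_forall (fun y => (pow_two (f y - 1)).symm))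
    · refine (ae_restrict_iff' hms).2 (Filter.Eventually.of_forall fun y hy => ?_)
      have := hbound y (Set.Ioo_subset_Icc_self hy)
      rw [Real.norm_eq_abs, abs_of_nonneg (sq_nonneg _)]
      nlinarith [abs_nonneg (f y - 1), sq_abs (f y - 1)]
  -- integrability of sqrt term
  have hsqrt_int : IntegrableOn (fun y => Real.sqrt ((1 - ε) + ε * f y)) s := by
    apply Integrable.mono' (integrable_const 2)
    · exact Real.continuous_sqrt.comp_aestronglyMeasurable
        (aestronglyMeasurable_const.add (hmeas.const_mul ε))
    · refine (ae_restrict_iff' hms).2 (Filter.Eventually.of_forall fun y hy => ?_)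
      rw [Real.norm_eq_abs, abs_of_nonneg (Real.sqrt_nonneg _)]
      have h1 := abs_le.1 (hbd y hy)
      calc Real.sqrt ((1 - ε) + ε * f y) ≤ Real.sqrt 4 := by
            apply Real.sqrt_le_sqrt; linarith [h1.2]
      _ = 2 := by rw [show (4:ℝ) = 2^2 by norm_num, Real.sqrt_sq]; norm_num
  -- integrability of the polynomial bounds
  have hpoly : ∀ c : ℝ, IntegrableOn
      (fun y => 1 + ε * (f y - 1)/2 - (ε*(f y - 1))^2/c) s := by
    intro c
    apply Integrable.sub
    · apply Integrable.add (integrable_const 1)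
      exact (((hf_int.sub (integrable_const 1)).const_mul ε).div_const 2)
    · exact (hsq.const_mul (ε^2)).div_const c |>.congr
        (Filter.Eventually.of_forall (fun y => by ring))
  -- basic integrals
  have hI1 : ∫ (_ : ℝ) in s, (1:ℝ) = 1 := by
    simp [hsdef]
  have hA : ∫ y in s, (f y - 1) = 0 := by
    rw [MeasureTheory.integral_sub hf_int (integrable_const 1), hint, hI1]; ring
  have hhalf : IntegrableOn (fun y => ε * (f y - 1)/2) s :=
    ((((hf_int.sub (integrable_const 1)).const_mul ε).div_const 2)).congr
      (Filter.Eventually.of_forall fun y => by simp)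
  have hquad : ∀ c : ℝ, IntegrableOn (fun y => (ε*(f y - 1))^2/c) s := fun c =>
    ((hsq.const_mul (ε^2)).div_const c).congr
      (Filter.Eventually.of_forall fun y => by simp; ring)
  have key : ∀ c : ℝ,
      ∫ y in s, (1 + ε * (f y - 1)/2 - (ε*(f y - 1))^2/c)
        = 1 - ε^2/c * ∫ y in s, (f y - 1)^2 := by
    intro c
    have hlin : IntegrableOn (fun y => 1 + ε * (f y - 1)/2) s :=
      (integrable_const 1).add hhalf
    have e0 : ∫ y in s, (1 + ε * (f y - 1)/2 - (ε*(f y - 1))^2/c)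
        = (∫ y in s, (1 + ε * (f y - 1)/2)) - ∫ y in s, (ε*(f y - 1))^2/c :=
      MeasureTheory.integral_sub hlin (hquad c)
    have e3 : ∫ y in s, (1 + ε * (f y - 1)/2)
        = (∫ (_ : ℝ) in s, (1:ℝ)) + ∫ y in s, ε * (f y - 1)/2 :=
      MeasureTheory.integral_add (integrable_const 1) hhalf
    have e1 : ∫ y in s, ε * (f y - 1)/2 = (ε/2) * ∫ y in s, (f y - 1) := by
      rw [← MeasureTheory.integral_const_mul]
      congr 1; ext y; ring
    have e2 : ∫ y in s, (ε*(f y - 1))^2/c = (ε^2/c) * ∫ y in s, (f y - 1)^2 := by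
      rw [← MeasureTheory.integral_const_mul]
      congr 1; ext y; ring
    rw [e0, e3, e1, e2, hA, hI1]; ring
  -- pointwise inequalities on s
  have hlow : ∀ y ∈ s, 1 + ε * (f y - 1)/2 - (ε*(f y - 1))^2/2
      ≤ Real.sqrt ((1 - ε) + ε * f y) := by
    intro y hy
    have h1 := abs_le.1 (hbd y hy)
    have := sqrt_lb (ε * (f y - 1)) h1.1 (by linarith [h1.2])
    calc 1 + ε * (f y - 1)/2 - (ε*(f y - 1))^2/2 ≤ Real.sqrt (1 + ε * (f y - 1)) := this
    _ = _ := by congr 1; ring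
  have hup : ∀ y ∈ s, Real.sqrt ((1 - ε) + ε * f y)
      ≤ 1 + ε * (f y - 1)/2 - (ε*(f y - 1))^2/18 := by
    intro y hy
    have h1 := abs_le.1 (hbd y hy)
    have := sqrt_ub (ε * (f y - 1)) h1.1 (by linarith [h1.2])
    calc Real.sqrt ((1 - ε) + ε * f y) = Real.sqrt (1 + ε * (f y - 1)) := by congr 1; ring
    _ ≤ _ := this
  have hle1 : 1 - ε^2/2 * ∫ y in s, (f y - 1)^2
      ≤ ∫ y in s, Real.sqrt ((1 - ε) + ε * f y) := by
    rw [← key 2]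
    exact MeasureTheory.setIntegral_mono_on (hpoly 2) hsqrt_int hms hlow
  have hle2 : ∫ y in s, Real.sqrt ((1 - ε) + ε * f y)
      ≤ 1 - ε^2/18 * ∫ y in s, (f y - 1)^2 := by
    rw [← key 18]
    exact MeasureTheory.setIntegral_mono_on hsqrt_int (hpoly 18) hms hup
  constructor <;> linarith
end
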